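/- arXiv:1412.5657 — 9 statements merged into one kernel-verified Lean document; each statement's English description precedes it below -/
import Mathlib

section
/- Fix an odd positive integer ℓ. There exists μ₀ > 0 such that for every real μ with |μ| > μ₀, the (ℓ+1) × (ℓ+1) matrix A⁺(μ), whose (i,j)-entry (for 1 ≤ i,j ≤ ℓ+1) is m_{i+j-1}(μ), is nonsingular. -/
open MeasureTheory ProbabilityTheory

/-- The k-th raw moment of the Gaussian N(μ,1). -/
noncomputable def gaussMoment (μ : ℝ) (k : ℕ) : ℝ :=
  ∫ x, x ^ k ∂(gaussianReal μ 1)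

/-- The (ℓ+1) × (ℓ+1) Hankel matrix whose (i,j)-entry (1 ≤ i,j ≤ ℓ+1) is m_{i+j-1}(μ). -/
noncomputable def Aplus (ℓ : ℕ) (μ : ℝ) : Matrix (Fin (ℓ + 1)) (Fin (ℓ + 1)) ℝ :=
  Matrix.of fun i j => gaussMoment μ (i.val + j.val + 1)

/-!
Translating by `μ` acts on the monomials `1, x, …, xᵏ` by the lower unitriangular binomial
matrix `T(μ)`, so `A⁺(μ) = T(μ) (μ G₀ + G₁) T(μ)ᵀ`, where `G_s` is the Hankel matrix of the
moments `m_{j+l+s}(0)` of the standard Gaussian. Hence `det A⁺(μ) = det (μ G₀ + G₁)` is a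
polynomial in `μ` whose coefficient of `μ^(ℓ+1)` is `det G₀`. This is nonzero because `G₀` is
positive definite: `cᵀ G₀ c` is the Gaussian integral of `p²`, where `p` is the polynomial with
coefficients `c`, and `p` vanishes only at finitely many points. A nonzero polynomial has no
roots of large modulus.
-/

open Matrix Polynomial Finset

theorem integrable_pow_gaussianReal (μ : ℝ) (v : NNReal) (k : ℕ) :
    Integrable (fun x : ℝ => x ^ k) (gaussianReal μ v) :=
  ((memLp_id_gaussianReal k).integrable_norm_pow').mono' (by fun_prop)
    (ae_of_all _ fun x => by simp [norm_pow])

theorem nullSingletonClass_gaussianReal (μ : ℝ) {v : NNReal} (hv : v ≠ 0) :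
    NullSingletonClass (gaussianReal μ v) :=
  ⟨fun x => gaussianReal_absolutelyContinuous μ hv (measure_singleton x)⟩

def binomialMatrix {R : Type*} [CommSemiring R] (n : ℕ) (μ : R) :
    Matrix (Fin n) (Fin n) R :=
  of fun i j => (i.val.choose j : R) * μ ^ (i.val - j)

theorem det_binomialMatrix {R : Type*} [CommRing R] (n : ℕ) (μ : R) :
    (binomialMatrix n μ).det = 1 := by
  rw [det_of_isLowerTriangular _ fun i j (hij : i < j) => by
    simp [binomialMatrix, Nat.choose_eq_zero_of_lt (Fin.lt_def.1 hij)]]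
  simp [binomialMatrix]

theorem add_pow_eq_sum_binomialMatrix {R : Type*} [CommSemiring R] {n : ℕ} (x μ : R)
    (i : Fin n) : (x + μ) ^ (i : ℕ) = ∑ j, binomialMatrix n μ i j * x ^ (j : ℕ) := by
  simp only [binomialMatrix, of_apply]
  rw [Fin.sum_univ_eq_sum_range (fun j => (i.val.choose j : R) * μ ^ (i.val - j) * x ^ j), add_pow]
  refine (sum_congr rfl fun j _ => by ring).trans
    (sum_subset (range_subset_range.2 i.isLt) fun j _ hj => ?_)
  simp [Nat.choose_eq_zero_of_lt (by simpa using hj : i.val < j)]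

theorem sum_mul_sum_mul_pow {R : Type*} [CommSemiring R] {n : ℕ} (a b : Fin n → R) (s : ℕ)
    (x : R) : (∑ j, a j * x ^ (j : ℕ)) * (∑ l, b l * x ^ (l : ℕ)) * x ^ s
      = ∑ j, ∑ l, a j * b l * x ^ (j.val + l.val + s) := by
  rw [sum_mul_sum, sum_mul]
  exact sum_congr rfl fun j _ => by rw [sum_mul]; exact sum_congr rfl fun l _ => by ring

noncomputable def momentHankel (ν : Measure ℝ) (s n : ℕ) : Matrix (Fin n) (Fin n) ℝ :=
  of fun j l => ∫ x, x ^ (j.val + l.val + s) ∂ν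

section Moments

variable {ν : Measure ℝ} (hmom : ∀ k, Integrable (fun x : ℝ => x ^ k) ν)
include hmom

theorem integrable_eval_of_integrable_pow (p : ℝ[X]) : Integrable (fun x => p.eval x) ν := by
  simp_rw [eval_eq_sum_range]
  exact integrable_finsetSum _ fun i _ => (hmom i).const_mul _

theorem integrable_sum_mul_sum_mul_pow {n : ℕ} (s : ℕ) (a b : Fin n → ℝ) :
    Integrable
      (fun x => (∑ j, a j * x ^ (j : ℕ)) * (∑ l, b l * x ^ (l : ℕ)) * x ^ s) ν := by
  simp_rw [sum_mul_sum_mul_pow]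
  exact integrable_finsetSum _ fun j _ => integrable_finsetSum _ fun l _ => (hmom _).const_mul _

theorem integral_sum_mul_sum_mul_pow {n : ℕ} (s : ℕ) (a b : Fin n → ℝ) :
    ∫ x, (∑ j, a j * x ^ (j : ℕ)) * (∑ l, b l * x ^ (l : ℕ)) * x ^ s ∂ν
      = a ⬝ᵥ (momentHankel ν s n *ᵥ b) := by
  simp_rw [sum_mul_sum_mul_pow]
  rw [integral_finsetSum _ fun j _ => integrable_finsetSum _ fun l _ => (hmom _).const_mul _]
  simp only [dotProduct, mulVec, momentHankel, of_apply, mul_sum]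
  refine sum_congr rfl fun j _ => ?_
  rw [integral_finsetSum _ fun l _ => (hmom _).const_mul _]
  exact sum_congr rfl fun l _ => by rw [integral_const_mul]; ring

theorem posDef_momentHankel [NullSingletonClass ν] [NeZero ν] (n : ℕ) :
    (momentHankel ν 0 n).PosDef := by
  refine .of_dotProduct_mulVec_pos ?_ fun c hc => ?_
  · ext j l
    simp [momentHankel, add_comm]
  set P : ℝ[X] := ∑ j, C (c j) * X ^ (j : ℕ)
  have hP : P ≠ 0 := by
    obtain ⟨j, hj⟩ := Function.ne_iff.1 hc
    have hcoeff : P.coeff j = c j := by simp [P, finsetSum_coeff, coeff_X_pow, Fin.val_inj]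
    exact fun h => hj (by rw [← hcoeff, h, coeff_zero]; rfl)
  have heval : ∀ x, P.eval x = ∑ j, c j * x ^ (j : ℕ) := by simp [P, eval_finsetSum]
  rw [star_trivial, ← integral_sum_mul_sum_mul_pow hmom]
  simp_rw [← heval, pow_zero, mul_one]
  have hnonneg : 0 ≤ fun x => P.eval x * P.eval x := fun x => mul_self_nonneg _
  refine (integral_nonneg hnonneg).lt_of_ne fun h => ?_
  have hint : Integrable (fun x => P.eval x * P.eval x) ν := by
    simpa only [eval_mul] using integrable_eval_of_integrable_pow hmom (P * P)
  have hzero : ∀ᵐ x ∂ν, P.eval x = 0 := by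
    filter_upwards [(integral_eq_zero_iff_of_nonneg hnonneg hint).1 h.symm] with x hx
    simpa using hx
  have hroot : ∀ᵐ x ∂ν, ¬ P.IsRoot x := (finite_setOfPred_isRoot hP).countable.ae_notMem ν
  have : ∀ᵐ x ∂ν, False := by filter_upwards [hzero, hroot] with x h1 h2 using h2 h1
  exact NeZero.ne ν (ae_eq_bot.1 (Filter.eventually_false_iff_eq_bot.1 this))

theorem momentHankel_map_add_const (μ : ℝ) (n : ℕ) :
    momentHankel (ν.map (· + μ)) 1 n = binomialMatrix n μ *
      (μ • momentHankel ν 0 n + momentHankel ν 1 n) * (binomialMatrix n μ)ᵀ := by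
  ext i k
  set T := binomialMatrix n μ
  have hshift : ∀ x : ℝ, (x + μ) ^ (i.val + k.val + 1) =
      μ * ((∑ j, T i j * x ^ (j : ℕ)) * (∑ l, T k l * x ^ (l : ℕ)) * x ^ 0) +
        (∑ j, T i j * x ^ (j : ℕ)) * (∑ l, T k l * x ^ (l : ℕ)) * x ^ 1 := by
    intro x
    rw [← add_pow_eq_sum_binomialMatrix, ← add_pow_eq_sum_binomialMatrix]
    ring
  rw [momentHankel, of_apply, integral_map (by fun_prop) (by fun_prop)]
  simp_rw [hshift]
  rw [integral_add ((integrable_sum_mul_sum_mul_pow hmom 0 _ _).const_mul μ)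
    (integrable_sum_mul_sum_mul_pow hmom 1 _ _), integral_const_mul,
    integral_sum_mul_sum_mul_pow hmom, integral_sum_mul_sum_mul_pow hmom, mul_mul_apply,
    transpose_transpose]
  simp only [add_mulVec, smul_mulVec, dotProduct_add, dotProduct_smul, smul_eq_mul]

end Moments

theorem Polynomial.exists_pos_forall_lt_abs_eval_ne_zero {p : ℝ[X]} (hp : p ≠ 0) :
    ∃ μ₀ : ℝ, 0 < μ₀ ∧ ∀ μ, μ₀ < |μ| → p.eval μ ≠ 0 := by
  obtain ⟨M, hM⟩ := ((finite_setOfPred_isRoot hp).image abs).bddAbove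
  refine ⟨max M 0 + 1, by positivity, fun μ hμ hroot => ?_⟩
  have : |μ| ≤ M := hM ⟨μ, hroot, rfl⟩
  linarith [le_max_left M 0]

theorem Matrix.exists_pos_forall_lt_abs_det_smul_add_ne_zero {n : Type*} [Fintype n]
    [DecidableEq n] (A B : Matrix n n ℝ) (hA : A.det ≠ 0) :
    ∃ μ₀ : ℝ, 0 < μ₀ ∧ ∀ μ : ℝ, μ₀ < |μ| → (μ • A + B).det ≠ 0 := by
  set p := det ((X : ℝ[X]) • A.map C + B.map C) with hp_def
  have hp : p ≠ 0 := fun h => hA <| by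
    rw [← coeff_det_X_add_C_card A B, ← hp_def, h, coeff_zero]
  have heval : ∀ μ, p.eval μ = (μ • A + B).det := fun μ => by
    rw [← coe_evalRingHom, RingHom.map_det]
    congr 1
    ext
    simp only [RingHom.mapMatrix_apply, map_apply, add_apply, smul_apply, coe_evalRingHom,
      eval_add, smul_eq_mul, eval_mul, eval_X, eval_C]
  obtain ⟨μ₀, hμ₀, hroot⟩ := exists_pos_forall_lt_abs_eval_ne_zero hp
  exact ⟨μ₀, hμ₀, fun μ hμ => heval μ ▸ hroot μ hμ⟩

theorem Aplus_eq_momentHankel (ℓ : ℕ) (μ : ℝ) :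
    Aplus ℓ μ = momentHankel ((gaussianReal 0 1).map (· + μ)) 1 (ℓ + 1) := by
  rw [gaussianReal_map_add_const, zero_add]
  rfl

theorem stmt2_general (ℓ : ℕ) :
    ∃ μ₀ : ℝ, 0 < μ₀ ∧ ∀ μ : ℝ, μ₀ < |μ| → (Aplus ℓ μ).det ≠ 0 := by
  have hmom := integrable_pow_gaussianReal 0 1
  have := nullSingletonClass_gaussianReal 0 one_ne_zero
  obtain ⟨μ₀, hμ₀, hdet⟩ := exists_pos_forall_lt_abs_det_smul_add_ne_zero _
    (momentHankel (gaussianReal 0 1) 1 (ℓ + 1)) (posDef_momentHankel hmom (ℓ + 1)).det_pos.ne'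
  refine ⟨μ₀, hμ₀, fun μ hμ => ?_⟩
  rw [Aplus_eq_momentHankel, momentHankel_map_add_const hmom, det_mul, det_mul, det_transpose,
    det_binomialMatrix, one_mul, mul_one]
  exact hdet μ hμ

/-- For odd positive ℓ, there is μ₀ > 0 such that A⁺(μ) is nonsingular whenever |μ| > μ₀. -/
theorem stmt2 (ℓ : ℕ) (hpos : 0 < ℓ) (hodd : Odd ℓ) :
    ∃ μ₀ : ℝ, 0 < μ₀ ∧ ∀ μ : ℝ, μ₀ < |μ| → (Aplus ℓ μ).det ≠ 0 :=
  stmt2_general ℓ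
end

section
/- Fix an odd positive integer ℓ, and let μ₀ > 0 be such that A⁺(μ) is nonsingular with |det(A⁺(μ))| ≥ 1 for every integer μ > μ₀. Then for every integer μ > μ₀, the smallest singular value of A⁺(μ) satisfies σ_min(A⁺(μ)) ≥ 1 / ((2ℓ+1)^{ℓ(2ℓ+2)} · μ^{ℓ(2ℓ+1)}). -/
open MeasureTheory ProbabilityTheory

/-- The smallest singular value of a real square matrix: the infimum of ‖Ax‖ over
unit vectors x (in the Euclidean norm). -/
noncomputable def sigmaMin {m : ℕ} (A : Matrix (Fin m) (Fin m) ℝ) : ℝ :=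
  sInf ((fun x : EuclideanSpace ℝ (Fin m) => ‖Matrix.toEuclideanCLM (𝕜 := ℝ) A x‖) ''
    {x | ‖x‖ = 1})

/-!
Each moment satisfies `|m_k(μ)| ≤ e · k! · μ^k` for `μ ≥ 1`: bound `|x|^k / k!` by `cosh (x / μ)`
and integrate with the Gaussian moment generating function, using `cosh 1 ≤ e^{1/2}`. Hence every
entry of `A⁺(μ)` is at most `((2ℓ+1) μ)^{2ℓ+1}`. Since `|det A⁺(μ)| ≥ 1`, the entries of the
inverse are bounded by the `ℓ × ℓ` minors, i.e. by `ℓ!` times the `ℓ`-th power of that bound, and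
the Frobenius norm bounds the operator norm of the inverse by `ℓ + 1` times its largest entry.
Finally `σ_min(A) ≥ 1 / ‖A⁻¹‖`.
-/

open Real
open scoped Nat

lemma Nat.factorial_succ_le_succ_pow : ∀ n : ℕ, (n + 1)! ≤ (n + 1) ^ n
  | 0 => le_rfl
  | n + 1 =>
    calc (n + 2)! = (n + 2) * (n + 1)! := Nat.factorial_succ _
      _ ≤ (n + 2) * (n + 2) ^ n := Nat.mul_le_mul_left _
          ((factorial_succ_le_succ_pow n).trans (Nat.pow_le_pow_left (n + 1).le_succ n))
      _ = (n + 2) ^ (n + 1) := by ring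

lemma Real.exp_one_mul_factorial_le_pow {k : ℕ} (hk : 3 ≤ k) : exp 1 * k ! ≤ (k : ℝ) ^ k := by
  obtain ⟨n, rfl⟩ : ∃ n, k = n + 1 := ⟨k - 1, by omega⟩
  have hfac : ((n + 1)! : ℝ) ≤ (n + 1 : ℝ) ^ n := by exact_mod_cast Nat.factorial_succ_le_succ_pow n
  have he : exp 1 ≤ n + 1 := by
    have : (3 : ℝ) ≤ n + 1 := by exact_mod_cast hk
    linarith [exp_one_lt_d9]
  calc exp 1 * (n + 1)! ≤ (n + 1 : ℝ) * (n + 1) ^ n := by gcongr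
    _ = ((n + 1 : ℕ) : ℝ) ^ (n + 1) := by push_cast; ring

lemma Real.abs_pow_div_factorial_le_cosh (x : ℝ) (n : ℕ) : |x| ^ n / n ! ≤ cosh x := by
  rw [← cosh_abs]
  obtain ⟨k, rfl | rfl⟩ := n.even_or_odd'
  · exact le_hasSum (hasSum_cosh |x|) k fun j _ ↦ by positivity
  · exact (le_hasSum (hasSum_sinh |x|) k fun j _ ↦ by positivity).trans (sinh_lt_cosh _).le

section Gaussian

variable (μ : ℝ) (v : NNReal) (t : ℝ)

lemma integrable_cosh_mul_gaussianReal : Integrable (fun x ↦ cosh (t * x)) (gaussianReal μ v) := by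
  simp_rw [cosh_eq]
  exact ((integrable_exp_mul_gaussianReal t).add
    (by simpa using integrable_exp_mul_gaussianReal (μ := μ) (v := v) (-t))).div_const 2

lemma integral_cosh_mul_gaussianReal :
    ∫ x, cosh (t * x) ∂gaussianReal μ v = exp (v * t ^ 2 / 2) * cosh (μ * t) := by
  have hmgf := fun s ↦ congrFun (mgf_id_gaussianReal (μ := μ) (v := v)) s
  simp only [mgf, id] at hmgf
  have hneg := hmgf (-t)
  simp only [neg_mul] at hneg
  simp_rw [cosh_eq, integral_div]
  rw [integral_add (integrable_exp_mul_gaussianReal t)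
    (by simpa using integrable_exp_mul_gaussianReal (μ := μ) (v := v) (-t)),
    hmgf t, hneg, ← mul_div_assoc, mul_add, ← exp_add, ← exp_add]
  ring_nf

end Gaussian

lemma abs_gaussMoment_le {μ : ℝ} (hμ : 1 ≤ μ) (k : ℕ) :
    |gaussMoment μ k| ≤ exp 1 * k ! * μ ^ k := by
  have hμ0 : 0 < μ := one_pos.trans_le hμ
  have hpt : ∀ x : ℝ, |x ^ k| ≤ k ! * μ ^ k * cosh (μ⁻¹ * x) := fun x ↦
    calc |x ^ k| = k ! * μ ^ k * (|μ⁻¹ * x| ^ k / k !) := by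
          rw [abs_pow, abs_mul, mul_pow, abs_inv, abs_of_pos hμ0, inv_pow]
          field_simp
      _ ≤ _ := by grw [abs_pow_div_factorial_le_cosh]
  have hcosh : exp (μ⁻¹ ^ 2 / 2) * cosh 1 ≤ exp 1 := by
    grw [cosh_le_exp_half_sq, ← exp_add, exp_le_exp]
    have : μ⁻¹ ^ 2 ≤ 1 := pow_le_one₀ (by positivity) (inv_le_one_of_one_le₀ hμ)
    linarith
  calc |gaussMoment μ k| ≤ ∫ x, |x ^ k| ∂gaussianReal μ 1 := abs_integral_le_integral_abs
    _ ≤ ∫ x, k ! * μ ^ k * cosh (μ⁻¹ * x) ∂gaussianReal μ 1 :=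
        integral_mono_of_nonneg (ae_of_all _ fun _ ↦ abs_nonneg _)
          ((integrable_cosh_mul_gaussianReal μ 1 _).const_mul _) (ae_of_all _ hpt)
    _ = k ! * μ ^ k * (exp (μ⁻¹ ^ 2 / 2) * cosh 1) := by
        rw [integral_const_mul, integral_cosh_mul_gaussianReal, NNReal.coe_one, one_mul,
          mul_inv_cancel₀ hμ0.ne']
    _ ≤ k ! * μ ^ k * exp 1 := by gcongr
    _ = exp 1 * k ! * μ ^ k := by ring

lemma abs_Aplus_apply_le {ℓ : ℕ} (hℓ : 0 < ℓ) {μ : ℝ} (hμ : 1 ≤ μ) (i j : Fin (ℓ + 1)) :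
    |Aplus ℓ μ i j| ≤ ((2 * ℓ + 1) * μ) ^ (2 * ℓ + 1) := by
  have hk : i.val + j.val + 1 ≤ 2 * ℓ + 1 := by omega
  calc |Aplus ℓ μ i j| ≤ exp 1 * (i.val + j.val + 1)! * μ ^ (i.val + j.val + 1) :=
        abs_gaussMoment_le hμ _
    _ ≤ exp 1 * (2 * ℓ + 1)! * μ ^ (2 * ℓ + 1) := by gcongr
    _ ≤ ((2 * ℓ + 1 : ℕ) : ℝ) ^ (2 * ℓ + 1) * μ ^ (2 * ℓ + 1) := by
        gcongr
        exact exp_one_mul_factorial_le_pow (by omega)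
    _ = ((2 * ℓ + 1) * μ) ^ (2 * ℓ + 1) := by push_cast; rw [mul_pow]

namespace Matrix

lemma norm_toEuclideanCLM_le {n : Type*} [Fintype n] [DecidableEq n] {A : Matrix n n ℝ} {b : ℝ}
    (hb : 0 ≤ b) (hA : ∀ i j, |A i j| ≤ b) :
    ‖toEuclideanCLM (𝕜 := ℝ) A‖ ≤ Fintype.card n * b := by
  refine ContinuousLinearMap.opNorm_le_bound _ (by positivity) fun x ↦ ?_
  have hrow : ∀ i, ∑ j, A i j ^ 2 ≤ Fintype.card n * b ^ 2 := fun i ↦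
    (Finset.sum_le_sum fun j _ ↦ sq_le_sq' (abs_le.mp (hA i j)).1 (abs_le.mp (hA i j)).2).trans_eq
      (by simp)
  refine le_of_pow_le_pow_left₀ two_ne_zero (by positivity) ?_
  calc ‖toEuclideanCLM (𝕜 := ℝ) A x‖ ^ 2 = ∑ i, (∑ j, A i j * x j) ^ 2 := by
        simp [EuclideanSpace.norm_sq_eq, mulVec, dotProduct]
    _ ≤ ∑ i, (∑ j, A i j ^ 2) * ∑ j, x j ^ 2 :=
        Finset.sum_le_sum fun i _ ↦ Finset.sum_mul_sq_le_sq_mul_sq _ _ _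
    _ ≤ ∑ _i : n, Fintype.card n * b ^ 2 * ‖x‖ ^ 2 := by
        gcongr with i
        · exact hrow i
        · simp [EuclideanSpace.norm_sq_eq]
    _ = (Fintype.card n * b * ‖x‖) ^ 2 := by simp; ring

lemma abs_adjugate_apply_le {n : ℕ} {A : Matrix (Fin (n + 1)) (Fin (n + 1)) ℝ} {b : ℝ}
    (hA : ∀ i j, |A i j| ≤ b) (i j : Fin (n + 1)) : |A.adjugate i j| ≤ n ! * b ^ n := by
  rw [adjugate_fin_succ_eq_det_submatrix, abs_mul, abs_pow, abs_neg, abs_one, one_pow, one_mul]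
  simpa using det_le (A := A.submatrix j.succAbove i.succAbove) (abv := AbsoluteValue.abs)
    fun _ _ ↦ hA _ _

lemma abs_inv_apply_le_abs_adjugate_apply {n : Type*} [Fintype n] [DecidableEq n]
    {A : Matrix n n ℝ} (hA : 1 ≤ |A.det|) (i j : n) : |A⁻¹ i j| ≤ |A.adjugate i j| := by
  rw [inv_def, Ring.inverse_eq_inv, smul_apply, smul_eq_mul, abs_mul, abs_inv]
  exact mul_le_of_le_one_left (abs_nonneg _) (inv_le_one_of_one_le₀ hA)

lemma norm_toEuclideanCLM_inv_le {n : ℕ} {A : Matrix (Fin (n + 1)) (Fin (n + 1)) ℝ} {b : ℝ}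
    (hb : 0 ≤ b) (hA : ∀ i j, |A i j| ≤ b) (hdet : 1 ≤ |A.det|) :
    ‖toEuclideanCLM (𝕜 := ℝ) A⁻¹‖ ≤ (n + 1)! * b ^ n :=
  (norm_toEuclideanCLM_le (by positivity) fun i j ↦
    (abs_inv_apply_le_abs_adjugate_apply hdet i j).trans (abs_adjugate_apply_le hA i j)).trans_eq
    (by push_cast [Fintype.card_fin, Nat.factorial_succ]; ring)

lemma inv_le_sigmaMin {m : ℕ} [NeZero m] {A : Matrix (Fin m) (Fin m) ℝ} (hA : IsUnit A.det)
    {D : ℝ} (hD : 0 < D) (hinv : ‖toEuclideanCLM (𝕜 := ℝ) A⁻¹‖ ≤ D) :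
    D⁻¹ ≤ sigmaMin A := by
  obtain ⟨x₀, hx₀⟩ := (NormedSpace.sphere_nonempty (E := EuclideanSpace ℝ (Fin m))
    (x := 0) (r := 1)).mpr zero_le_one
  refine le_csInf ⟨_, x₀, by simpa using hx₀, rfl⟩ ?_
  rintro _ ⟨x, hx : ‖x‖ = 1, rfl⟩
  have hcancel : toEuclideanCLM (𝕜 := ℝ) A⁻¹ (toEuclideanCLM (𝕜 := ℝ) A x) = x := by
    rw [← mul_apply_eq_comp, ← map_mul, nonsing_inv_mul A hA, map_one,
      one_apply_eq_self]
  rw [inv_le_iff_one_le_mul₀' hD]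
  calc 1 = ‖toEuclideanCLM (𝕜 := ℝ) A⁻¹ (toEuclideanCLM (𝕜 := ℝ) A x)‖ := by
        rw [hcancel, hx]
    _ ≤ ‖toEuclideanCLM (𝕜 := ℝ) A⁻¹‖ * ‖toEuclideanCLM (𝕜 := ℝ) A x‖ :=
        ContinuousLinearMap.le_opNorm _ _
    _ ≤ D * ‖toEuclideanCLM (𝕜 := ℝ) A x‖ := by gcongr

end Matrix

theorem stmt5_general (ℓ : ℕ) (hpos : 0 < ℓ) (μ₀ : ℝ) (hμ₀ : 0 < μ₀)
    (hdet : ∀ μ : ℤ, μ₀ < (μ : ℝ) →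
      (Aplus ℓ (μ : ℝ)).det ≠ 0 ∧ 1 ≤ |(Aplus ℓ (μ : ℝ)).det|) :
    ∀ μ : ℤ, μ₀ < (μ : ℝ) →
      1 / ((2 * ℓ + 1 : ℝ) ^ (ℓ * (2 * ℓ + 2)) * (μ : ℝ) ^ (ℓ * (2 * ℓ + 1))) ≤
        sigmaMin (Aplus ℓ (μ : ℝ)) := by
  intro μ hμ
  obtain ⟨hdet0, hdet1⟩ := hdet μ hμ
  have hμ1 : (1 : ℝ) ≤ μ := by exact_mod_cast (Int.cast_pos.mp (hμ₀.trans hμ) : 0 < μ)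
  have hμ0 : (0 : ℝ) < μ := one_pos.trans_le hμ1
  have hinv := Matrix.norm_toEuclideanCLM_inv_le (by positivity) (abs_Aplus_apply_le hpos hμ1) hdet1
  have hfac : ((ℓ + 1)! : ℝ) ≤ (2 * ℓ + 1 : ℝ) ^ ℓ := by
    exact_mod_cast (Nat.factorial_succ_le_succ_pow ℓ).trans (Nat.pow_le_pow_left (by omega) ℓ)
  rw [one_div]
  refine Matrix.inv_le_sigmaMin (isUnit_iff_ne_zero.mpr hdet0) (by positivity) (hinv.trans ?_)
  calc _ ≤ (2 * ℓ + 1 : ℝ) ^ ℓ * (((2 * ℓ + 1) * μ) ^ (2 * ℓ + 1)) ^ ℓ := by gcongr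
    _ = _ := by rw [mul_pow, mul_pow, ← pow_mul, ← pow_mul]; ring

/-- For odd positive ℓ and μ₀ > 0 such that A⁺(μ) is nonsingular with |det A⁺(μ)| ≥ 1 for every
integer μ > μ₀, every integer μ > μ₀ satisfies
σ_min(A⁺(μ)) ≥ 1 / ((2ℓ+1)^{ℓ(2ℓ+2)} · μ^{ℓ(2ℓ+1)}). -/
theorem stmt5 (ℓ : ℕ) (hpos : 0 < ℓ) (hodd : Odd ℓ) (μ₀ : ℝ) (hμ₀ : 0 < μ₀)
    (hdet : ∀ μ : ℤ, μ₀ < (μ : ℝ) →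
      (Aplus ℓ (μ : ℝ)).det ≠ 0 ∧ 1 ≤ |(Aplus ℓ (μ : ℝ)).det|) :
    ∀ μ : ℤ, μ₀ < (μ : ℝ) →
      1 / ((2 * ℓ + 1 : ℝ) ^ (ℓ * (2 * ℓ + 2)) * (μ : ℝ) ^ (ℓ * (2 * ℓ + 1))) ≤
        sigmaMin (Aplus ℓ (μ : ℝ)) :=
  stmt5_general ℓ hpos μ₀ hμ₀ hdet
end

section
/- Let μ ≥ 0, let z be a Gaussian random variable with mean μ and variance 1, and let z' := max(z, 0). Then for every positive integer k, |E[z'^k] − E[z^k]| ≤ e^{−μ²/2} · (k−1)!!, where (k−1)!! denotes the double factorial of k−1. -/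
/-!
Since `max x 0 ^ k - x ^ k` vanishes for `x > 0` and is bounded by `|x| ^ k`, the difference of
the two moments only sees the negative half-line. There `(x - μ)² ≥ x² + μ²` because `μ x ≤ 0`,
so the density of `N(μ, 1)` is at most `exp (-μ² / 2)` times that of `N(0, 1)`. What remains is
`E|Z| ^ k = 2 ^ (k / 2) Γ((k + 1) / 2) / √π` for a standard Gaussian `Z`, and the recurrence
`Γ(s + 1) = s Γ(s)` bounds it by `(k - 1)‼`, with equality for even `k`.
-/

open MeasureTheory ProbabilityTheory Nat Real Set

lemma gaussianPDFReal_le_exp_mul_gaussianPDFReal_zero {μ x : ℝ} (v : NNReal) (hμx : μ * x ≤ 0) :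
    gaussianPDFReal μ v x ≤ exp (-μ ^ 2 / (2 * v)) * gaussianPDFReal 0 v x := by
  simp only [gaussianPDFReal, sub_zero]
  rw [mul_left_comm, ← exp_add]
  gcongr
  rw [← add_div]
  gcongr
  nlinarith

lemma gaussianReal_restrict_Iic_zero_le (v : NNReal) {μ : ℝ} (hμ : 0 ≤ μ) :
    (gaussianReal μ v).restrict (Iic 0) ≤
      ENNReal.ofReal (exp (-μ ^ 2 / (2 * v))) • gaussianReal 0 v := by
  rcases eq_or_ne v 0 with rfl | hv
  · rw [gaussianReal_zero_var, gaussianReal_zero_var]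
    simp only [NNReal.coe_zero, mul_zero, div_zero, exp_zero, ENNReal.ofReal_one, one_smul]
    rcases hμ.eq_or_lt with rfl | hμ
    · exact Measure.restrict_le_self
    · classical
      simp [restrict_dirac, not_le.2 hμ, Measure.zero_le]
  refine Measure.le_iff.2 fun s hs => ?_
  rw [Measure.restrict_apply hs, Measure.smul_apply, gaussianReal_apply _ hv,
    gaussianReal_apply _ hv, smul_eq_mul, ← lintegral_const_mul' _ _ ENNReal.ofReal_ne_top]
  calc ∫⁻ x in s ∩ Iic 0, gaussianPDF μ v x
      ≤ ∫⁻ x in s ∩ Iic 0, ENNReal.ofReal (exp (-μ ^ 2 / (2 * v))) * gaussianPDF 0 v x := by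
        refine setLIntegral_mono' (hs.inter measurableSet_Iic) fun x hx => ?_
        rw [gaussianPDF, gaussianPDF, ← ENNReal.ofReal_mul (exp_pos _).le]
        exact ENNReal.ofReal_le_ofReal <| gaussianPDFReal_le_exp_mul_gaussianPDFReal_zero v
          (mul_nonpos_of_nonneg_of_nonpos hμ hx.2)
    _ ≤ _ := lintegral_mono_set inter_subset_left

lemma integral_abs_pow_gaussianReal_zero_one (k : ℕ) :
    ∫ x, |x| ^ k ∂gaussianReal 0 1 = (2 : ℝ) ^ ((k : ℝ) / 2) * Gamma ((k + 1) / 2) / √π := by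
  have hhalf := integral_rpow_mul_exp_neg_mul_rpow (p := 2) (q := k) (b := 1 / 2) two_pos
    (by linarith [k.cast_nonneg (α := ℝ)]) one_half_pos
  simp only [rpow_two, rpow_natCast] at hhalf
  calc ∫ x, |x| ^ k ∂gaussianReal 0 1
      = ∫ x, (fun t => (√(2 * π))⁻¹ * (t ^ k * exp (-(1 / 2) * t ^ 2))) |x| := by
        rw [integral_gaussianReal_eq_integral_smul one_ne_zero]
        congr with x
        simp [gaussianPDFReal]
        ring_nf
    _ = 2 * (√(2 * π))⁻¹ * ∫ x in Ioi 0, x ^ k * exp (-(1 / 2) * x ^ 2) := by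
        rw [integral_comp_abs (f := fun t => (√(2 * π))⁻¹ * (t ^ k * exp (-(1 / 2) * t ^ 2))),
          integral_const_mul, mul_assoc]
    _ = _ := by
        rw [hhalf, one_div, inv_rpow zero_le_two, ← rpow_neg zero_le_two, neg_div, neg_neg,
          add_div, rpow_add two_pos, sqrt_mul zero_le_two, ← sqrt_eq_rpow, one_div]
        field_simp

lemma two_rpow_mul_Gamma_le_sqrt_pi_mul_doubleFactorial (n : ℕ) :
    (2 : ℝ) ^ ((n : ℝ) / 2) * Gamma ((n + 1) / 2) ≤ √π * (n - 1)‼ := by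
  induction n using Nat.twoStepInduction with
  | zero => simp [-one_div, Gamma_one_half_eq]
  | one =>
    norm_num
    rw [← sqrt_eq_rpow]
    exact sqrt_le_sqrt (by linarith [pi_gt_three])
  | more n ih _ =>
    have hrec : (2 : ℝ) ^ (((n + 2 : ℕ) : ℝ) / 2) * Gamma (((n + 2 : ℕ) + 1) / 2)
        = (n + 1) * ((2 : ℝ) ^ ((n : ℝ) / 2) * Gamma ((n + 1) / 2)) := by
      rw [show (((n + 2 : ℕ) : ℝ) + 1) / 2 = (n + 1) / 2 + 1 by push_cast; ring,
        Gamma_add_one (by positivity), show ((n + 2 : ℕ) : ℝ) / 2 = n / 2 + 1 by push_cast; ring,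
        rpow_add_one two_ne_zero]
      ring
    rw [hrec, show n + 2 - 1 = n + 1 by omega, doubleFactorial_add_one]
    push_cast
    nlinarith

lemma integral_abs_pow_gaussianReal_zero_one_le (k : ℕ) :
    ∫ x, |x| ^ k ∂gaussianReal 0 1 ≤ (k - 1)‼ := by
  rw [integral_abs_pow_gaussianReal_zero_one, div_le_iff₀' (sqrt_pos.2 pi_pos)]
  exact two_rpow_mul_Gamma_le_sqrt_pi_mul_doubleFactorial k

lemma abs_max_zero_pow_sub_pow_le (x : ℝ) (k : ℕ) : |max x 0 ^ k - x ^ k| ≤ |x| ^ k := by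
  rcases le_total 0 x with hx | hx
  · simp [max_eq_left hx]
  · rcases k.eq_zero_or_pos with rfl | hk
    · simp
    · simp [max_eq_right hx, zero_pow hk.ne']

theorem stmt6_general (μ : ℝ) (hμ : 0 ≤ μ) (k : ℕ) :
    |(∫ x, (max x 0) ^ k ∂(gaussianReal μ 1)) - ∫ x, x ^ k ∂(gaussianReal μ 1)| ≤
      Real.exp (-(μ ^ 2) / 2) * (Nat.doubleFactorial (k - 1) : ℝ) := by
  have habs (m : ℝ) (v : NNReal) : Integrable (fun x : ℝ => |x| ^ k) (gaussianReal m v) :=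
    integrable_pow_abs_of_mem_interior_integrableExpSet (by simp) k
  have hpow : Integrable (fun x : ℝ => x ^ k) (gaussianReal μ 1) :=
    integrable_pow_of_mem_interior_integrableExpSet (by simp) k
  have hmax : Integrable (fun x : ℝ => max x 0 ^ k) (gaussianReal μ 1) :=
    (habs _ _).mono' (by fun_prop) (ae_of_all _ fun x => by
      rw [norm_pow, norm_eq_abs, abs_of_nonneg (le_max_right x 0)]
      exact pow_le_pow_left₀ (le_max_right x 0) (max_le (le_abs_self x) (abs_nonneg x)) k)
  rw [← integral_sub hmax hpow, ← setIntegral_eq_integral_of_forall_compl_eq_zero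
    (s := Iic 0) fun x hx => by rw [mem_Iic, not_le] at hx; simp [hx.le]]
  calc |∫ x in Iic 0, max x 0 ^ k - x ^ k ∂gaussianReal μ 1|
      ≤ ∫ x in Iic 0, |x| ^ k ∂gaussianReal μ 1 := by
        simpa only [norm_eq_abs] using norm_integral_le_of_norm_le (habs μ 1).restrict
          (ae_of_all _ fun x => (norm_eq_abs _).trans_le (abs_max_zero_pow_sub_pow_le x k))
    _ ≤ ∫ x, |x| ^ k ∂(ENNReal.ofReal (exp (-μ ^ 2 / 2)) • gaussianReal 0 1) := by
        refine integral_mono_measure ?_ (ae_of_all _ fun x => by positivity) ?_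
        · simpa using gaussianReal_restrict_Iic_zero_le 1 hμ
        · exact (habs _ _).smul_measure ENNReal.ofReal_ne_top
    _ ≤ exp (-μ ^ 2 / 2) * (k - 1)‼ := by
        rw [integral_smul_measure, ENNReal.toReal_ofReal (exp_pos _).le, smul_eq_mul]
        exact mul_le_mul_of_nonneg_left (integral_abs_pow_gaussianReal_zero_one_le k)
          (exp_pos _).le

/-- For μ ≥ 0, z ~ N(μ,1) and z' = max(z,0), for every positive integer k we have
|E[z'^k] − E[z^k]| ≤ e^{−μ²/2} · (k−1)!!. -/
theorem stmt6 (μ : ℝ) (hμ : 0 ≤ μ) (k : ℕ) (hk : 1 ≤ k) :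
    |(∫ x, (max x 0) ^ k ∂(gaussianReal μ 1)) - ∫ x, x ^ k ∂(gaussianReal μ 1)| ≤
      Real.exp (-(μ ^ 2) / 2) * (Nat.doubleFactorial (k - 1) : ℝ) :=
  stmt6_general μ hμ k
end

section
/- Let ℓ be an odd positive integer and let r = (ℓ+1)/2. Let B be the r × r matrix whose (i,j)-entry (for 1 ≤ i, j ≤ r) is the double factorial (2(i+j) − 3)!!. Then det(B) equals the product of j! over all odd integers j with 1 ≤ j ≤ ℓ; that is, det(B) = ∏_{j odd, 1 ≤ j ≤ ℓ} j!. -/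
/-!
Write `H a r` for the `r × r` matrix with entries `(2(a + i + j) + 1)‼`. Since
`(2n + 3)‼ = (2n + 3) · (2n + 1)‼`, subtracting `2(a + i) + 3` times row `i` from row `i + 1`
turns that row into `(2j · (2(a + i + j) + 1)‼)_j`. The first column becomes
`((2a + 1)‼, 0, …, 0)`, and the complementary minor is `H (a + 1) r` with column `j` scaled by
`2(j + 1)`. Hence `det H a (r + 1) = (2a + 1)‼ · (2r)‼ · det H (a + 1) r`, and unrolling gives
`det H 0 r = ∏_{k < r} (2k + 1)‼ (2k)‼ = ∏_{k < r} (2k + 1)!`.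
-/

open Nat Finset Matrix

def oddDoubleFactorialHankel (R : Type*) [CommRing R] (a r : ℕ) : Matrix (Fin r) (Fin r) R :=
  of fun i j => ((2 * (a + i + j) + 1)‼ : R)

theorem Nat.prod_range_two_mul_add_one_eq_doubleFactorial (r : ℕ) :
    ∏ k ∈ range r, 2 * (k + 1) = (2 * r)‼ := by
  rw [prod_mul_distrib, prod_const, card_range, prod_range_add_one_eq_factorial,
    doubleFactorial_two_mul]

namespace oddDoubleFactorialHankel

variable {R : Type*} [CommRing R]

theorem det_succ (a r : ℕ) :
    (oddDoubleFactorialHankel R a (r + 1)).det =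
      (2 * a + 1)‼ * (2 * r)‼ * (oddDoubleFactorialHankel R (a + 1) r).det := by
  set A := oddDoubleFactorialHankel R a (r + 1)
  let B : Matrix (Fin (r + 1)) (Fin (r + 1)) R :=
    of (Fin.cons (A 0) fun i j => (2 * j : R) * (2 * (a + i + j) + 1)‼)
  have hAB : A.det = B.det := by
    refine det_eq_of_forall_row_eq_smul_add_pred (fun i => (2 * (a + i) + 3 : R)) (fun j => rfl)
      fun i j => ?_
    simp only [A, B, oddDoubleFactorialHankel, of_apply, Fin.cons_succ, Fin.val_succ,
      Fin.val_castSucc]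
    rw [show 2 * (a + (i + 1) + j) + 1 = 2 * (a + i + j) + 1 + 2 by ring,
      doubleFactorial_add_two]
    push_cast
    ring
  have hB : B.det = (2 * a + 1)‼ * (B.submatrix Fin.succ Fin.succ).det := by
    rw [det_succ_column_zero, Fin.sum_univ_succ, Finset.sum_eq_zero fun i _ => ?_]
    · simp [B, A, oddDoubleFactorialHankel]
    · simp [B]
  have hminor : B.submatrix Fin.succ Fin.succ =
      of fun i j : Fin r =>
        (2 * ((j : ℕ) + 1) : R) * oddDoubleFactorialHankel R (a + 1) r i j := by
    ext i j
    simp only [B, submatrix_apply, of_apply, Fin.cons_succ, Fin.val_succ,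
      oddDoubleFactorialHankel]
    rw [show a + i + (j + 1) = a + 1 + i + j by ring]
    push_cast
    ring
  rw [hAB, hB, hminor, det_mul_row, Fin.prod_univ_eq_prod_range (fun k => (2 * (k + 1) : R)),
    ← Nat.prod_range_two_mul_add_one_eq_doubleFactorial]
  push_cast
  ring

theorem det_eq (a r : ℕ) :
    (oddDoubleFactorialHankel R a r).det =
      ((∏ k ∈ range r, (2 * (a + k) + 1)‼) * ∏ k ∈ range r, (2 * k)‼ : ℕ) := by
  induction r generalizing a with
  | zero => simp
  | succ r ih =>
    rw [det_succ, ih, prod_range_succ', prod_range_succ (fun k => (2 * k)‼)]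
    simp only [add_assoc, add_comm 1, add_zero]
    push_cast
    ring

theorem det_zero (r : ℕ) :
    (oddDoubleFactorialHankel R 0 r).det = ∏ k ∈ range r, ((2 * k + 1)! : R) := by
  simp only [det_eq, zero_add, ← prod_mul_distrib, factorial_eq_mul_doubleFactorial, cast_prod]

end oddDoubleFactorialHankel

theorem Nat.filter_odd_Icc_one_eq_image (m : ℕ) :
    (Icc 1 (2 * m + 1)).filter Odd = (range (m + 1)).image fun k => 2 * k + 1 := by
  ext j
  simp only [mem_filter, mem_Icc, mem_image, mem_range, Nat.odd_iff]
  constructor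
  · rintro ⟨⟨-, hj⟩, h⟩
    exact ⟨j / 2, by omega, by omega⟩
  · rintro ⟨k, hk, rfl⟩
    omega

theorem stmt7_general (ℓ : ℕ) (hodd : Odd ℓ) :
    (Matrix.of fun i j : Fin ((ℓ + 1) / 2) =>
        (Nat.doubleFactorial (2 * i.val + 2 * j.val + 1) : ℤ)).det =
      ∏ j ∈ (Finset.Icc 1 ℓ).filter (fun j => Odd j), (Nat.factorial j : ℤ) := by
  obtain ⟨m, rfl⟩ := hodd
  have hH : (of fun i j : Fin ((2 * m + 1 + 1) / 2) => ((2 * i.val + 2 * j.val + 1)‼ : ℤ)) =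
      oddDoubleFactorialHankel ℤ 0 _ := by
    ext
    simp [oddDoubleFactorialHankel, mul_add]
  rw [hH, oddDoubleFactorialHankel.det_zero, show (2 * m + 1 + 1) / 2 = m + 1 by omega,
    Nat.filter_odd_Icc_one_eq_image, prod_image fun _ _ _ _ h => by omega]

/-- For odd positive ℓ and r = (ℓ+1)/2, the r × r matrix B with (i,j)-entry (1 ≤ i,j ≤ r)
equal to (2(i+j) − 3)!! has determinant ∏_{j odd, 1 ≤ j ≤ ℓ} j!. -/
theorem stmt7 (ℓ : ℕ) (hpos : 0 < ℓ) (hodd : Odd ℓ) :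
    (Matrix.of fun i j : Fin ((ℓ + 1) / 2) =>
        (Nat.doubleFactorial (2 * i.val + 2 * j.val + 1) : ℤ)).det =
      ∏ j ∈ (Finset.Icc 1 ℓ).filter (fun j => Odd j), (Nat.factorial j : ℤ) :=
  stmt7_general ℓ hodd
end

section
/- Let n and k be positive integers, let A = {V^(1), …, V^(k)} ⊆ {−1/√n, 1/√n}^n, and let r ≥ 0. Then there exists a set cover(A) ⊆ {−1/√n, 1/√n}^n with |cover(A)| ≤ 2^{k²} such that every V ∈ {−1/√n, 1/√n}^n whose Euclidean distance to the linear span of A is at most r satisfies d_Ham(V, Y) ≤ r²·n for some Y ∈ cover(A). -/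
/-!
Write a point of span{V⁽¹⁾, …, V⁽ᵏ⁾} as U = Σⱼ xⱼ V⁽ʲ⁾, so that Uᵢ = ⟪x, ρᵢ⟫ with ρᵢ ∈ ℝᵏ the i-th
row of the n × k matrix with columns V⁽ʲ⁾. After a small generic perturbation of x, which only
decides the signs of the zero coordinates, the sign vector of U is read off a chamber of the
central arrangement of the hyperplanes ρᵢ^⊥ in ℝᵏ. The rows take at most m = 2ᵏ values, and
deletion–restriction bounds the number of chambers by 2·Σ_{i<k} C(m-1, i) ≤ mᵏ = 2^{k²}.
Rounding U to its sign vector Y, every coordinate where a hypercube point W differs from Y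
contributes at least 1/n to ‖W - U‖² ≤ r².
-/
open Metric

/-- The scaled hypercube {−1/√n, 1/√n}^n as a subset of Euclidean space. -/
def scaledCube (n : ℕ) : Set (EuclideanSpace ℝ (Fin n)) :=
  {X | ∀ i, X i = 1 / Real.sqrt n ∨ X i = -(1 / Real.sqrt n)}

open Finset RealInnerProductSpace Module Filter Topology

def chamberBound : ℕ → ℕ → ℕ
  | 0, _ => 1
  | _ + 1, 0 => 0
  | m + 1, d + 1 => chamberBound m (d + 1) + chamberBound m d

theorem chamberBound_mono_right (m : ℕ) : Monotone (chamberBound m) := by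
  induction m with
  | zero => exact fun _ _ _ => le_rfl
  | succ m ih =>
    refine monotone_nat_of_le_succ fun d => ?_
    cases d with
    | zero => exact Nat.zero_le _
    | succ d =>
      simp only [chamberBound]
      exact Nat.add_le_add (ih d.succ.le_succ) (ih d.le_succ)

theorem chamberBound_le_succ_left (m d : ℕ) :
    chamberBound m (d + 1) ≤ chamberBound (m + 1) (d + 1) :=
  Nat.le_add_right _ _

theorem chamberBound_le_pow {m : ℕ} (hm : 2 ≤ m) (d : ℕ) : chamberBound m d ≤ m ^ d := by
  induction m, hm using Nat.le_induction generalizing d with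
  | base =>
    match d with
    | 0 => simp [chamberBound]
    | 1 => simp [chamberBound]
    | d + 2 =>
      simp only [chamberBound]
      calc 4 = 2 ^ 2 := rfl
        _ ≤ 2 ^ (d + 2) := Nat.pow_le_pow_right two_pos (by omega)
  | succ m hm ih =>
    cases d with
    | zero => simp [chamberBound]
    | succ d =>
      calc chamberBound (m + 1) (d + 1) = chamberBound m (d + 1) + chamberBound m d := rfl
        _ ≤ m ^ (d + 1) + m ^ d := Nat.add_le_add (ih _) (ih _)
        _ = m ^ d * (m + 1) := by ring
        _ ≤ (m + 1) ^ d * (m + 1) := Nat.mul_le_mul_right _ (Nat.pow_le_pow_left m.le_succ d)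
        _ = (m + 1) ^ (d + 1) := (pow_succ _ _).symm

theorem chamberBound_le_two_pow_sq {m k : ℕ} (hm : m ≤ 2 ^ k) (hk : 0 < k) :
    chamberBound m k ≤ 2 ^ (k ^ 2) := by
  obtain ⟨d, rfl⟩ : ∃ d, k = d + 1 := ⟨k - 1, by omega⟩
  have hmono : Monotone fun m => chamberBound m (d + 1) :=
    monotone_nat_of_le_succ fun m => chamberBound_le_succ_left m d
  calc chamberBound m (d + 1) ≤ chamberBound (2 ^ (d + 1)) (d + 1) := hmono hm
    _ ≤ (2 ^ (d + 1)) ^ (d + 1) := chamberBound_le_pow (Nat.le_self_pow d.succ_ne_zero 2) _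
    _ = 2 ^ ((d + 1) ^ 2) := by rw [← pow_mul, sq]

theorem mul_add_mul_ne_zero_and_pos_iff {a b u v : ℝ} (ha : 0 < a) (hb : 0 < b) (hu : u ≠ 0)
    (hv : v ≠ 0) (huv : 0 < u ↔ 0 < v) : a * u + b * v ≠ 0 ∧ (0 < a * u + b * v ↔ 0 < u) := by
  rcases hu.lt_or_gt with hu | hu
  · have hv : v < 0 := hv.lt_of_le (not_lt.1 fun h => hu.not_gt (huv.2 h))
    have hneg : a * u + b * v < 0 := by nlinarith
    exact ⟨hneg.ne, iff_of_false hneg.not_gt hu.not_gt⟩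
  · have hpos : 0 < a * u + b * v := by nlinarith [huv.1 hu]
    exact ⟨hpos.ne', iff_of_true hpos hu⟩

section ChamberPatterns

variable {E : Type*} [NormedAddCommGroup E] [InnerProductSpace ℝ E]

open Classical in
/-- A chamber of the arrangement `{c◮ | c ∈ C}` inside `W` is recorded by the set of `c` on whose
positive side it lies. -/
noncomputable def chamberPatterns (C : Finset E) (W : Submodule ℝ E) : Finset (Finset E) :=
  C.powerset.filter fun S => ∃ x ∈ W, (∀ c ∈ C, ⟪x, c⟫ ≠ 0) ∧ {c ∈ C | 0 < ⟪x, c⟫} = S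

theorem mem_chamberPatterns {C : Finset E} {W : Submodule ℝ E} {S : Finset E} :
    S ∈ chamberPatterns C W ↔ ∃ x ∈ W, (∀ c ∈ C, ⟪x, c⟫ ≠ 0) ∧ {c ∈ C | 0 < ⟪x, c⟫} = S := by
  classical
  rw [chamberPatterns, mem_filter, mem_powerset, and_iff_right_iff_imp]
  rintro ⟨x, -, -, rfl⟩
  exact filter_subset _ _

theorem chamberPatterns_empty_subset (W : Submodule ℝ E) : chamberPatterns ∅ W ⊆ {∅} := by
  intro S hS
  obtain ⟨x, -, -, rfl⟩ := mem_chamberPatterns.1 hS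
  simp

theorem chamberPatterns_eq_empty_of_le_orthogonal {C : Finset E} {W : Submodule ℝ E} {c : E}
    (hc : c ∈ C) (hW : W ≤ (ℝ ∙ c)ᗮ) : chamberPatterns C W = ∅ := by
  refine eq_empty_of_forall_notMem fun S hS => ?_
  obtain ⟨x, hxW, hx, -⟩ := mem_chamberPatterns.1 hS
  exact hx c hc (Submodule.mem_orthogonal_singleton_iff_inner_left.1 (hW hxW))

theorem erase_mem_chamberPatterns [DecidableEq E] {C : Finset E} {W : Submodule ℝ E} {c : E}
    {S : Finset E} (hc : c ∉ C) (hS : S ∈ chamberPatterns (insert c C) W) :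
    S.erase c ∈ chamberPatterns C W := by
  obtain ⟨x, hxW, hx, rfl⟩ := mem_chamberPatterns.1 hS
  refine mem_chamberPatterns.2 ⟨x, hxW, fun c' hc' => hx c' (mem_insert_of_mem hc'), ?_⟩
  rw [filter_insert, apply_ite (erase · c), erase_insert (fun h => hc (mem_filter.1 h).1),
    erase_eq_of_notMem (fun h => hc (mem_filter.1 h).1), ite_self]

/-- If both `S` and `insert c S` are patterns on `W`, a positive combination of two witnesses
lies on the hyperplane `c◮` and still realises `S` on the other hyperplanes. -/
theorem mem_chamberPatterns_inf_orthogonal [DecidableEq E] {C : Finset E} {W : Submodule ℝ E}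
    {c : E} {S : Finset E} (hc : c ∉ C) (hcS : c ∉ S)
    (hS : S ∈ chamberPatterns (insert c C) W)
    (hcS' : insert c S ∈ chamberPatterns (insert c C) W) :
    S ∈ chamberPatterns C (W ⊓ (ℝ ∙ c)ᗮ) := by
  obtain ⟨y, hyW, hy, hyS⟩ := mem_chamberPatterns.1 hS
  obtain ⟨x, hxW, hx, hxS⟩ := mem_chamberPatterns.1 hcS'
  have hpos (z : E) {T : Finset E} (h : {c ∈ insert c C | 0 < ⟪z, c⟫} = T) {c' : E}
      (hc' : c' ∈ insert c C) : 0 < ⟪z, c'⟫ ↔ c' ∈ T := by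
    rw [← h, mem_filter, and_iff_right hc']
  have hxc : 0 < ⟪x, c⟫ := (hpos x hxS (mem_insert_self c C)).2 (mem_insert_self c S)
  have hyc : ⟪y, c⟫ < 0 := (hy c (mem_insert_self c C)).lt_of_le
    (not_lt.1 fun h => hcS ((hpos y hyS (mem_insert_self c C)).1 h))
  have hsame {c' : E} (hc' : c' ∈ C) : 0 < ⟪x, c'⟫ ↔ 0 < ⟪y, c'⟫ := by
    have hne : c' ≠ c := fun h => hc (h ▸ hc')
    rw [hpos x hxS (mem_insert_of_mem hc'), hpos y hyS (mem_insert_of_mem hc'), mem_insert,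
      or_iff_right hne]
  set z := ⟪x, c⟫ • y - ⟪y, c⟫ • x
  have hz (c' : E) : ⟪z, c'⟫ = ⟪x, c⟫ * ⟪y, c'⟫ + -⟪y, c⟫ * ⟪x, c'⟫ := by
    simp only [z, inner_sub_left, real_inner_smul_left]; ring
  have hzC {c' : E} (hc' : c' ∈ C) : ⟪z, c'⟫ ≠ 0 ∧ (0 < ⟪z, c'⟫ ↔ 0 < ⟪y, c'⟫) := by
    rw [hz]
    exact mul_add_mul_ne_zero_and_pos_iff hxc (neg_pos.2 hyc) (hy c' (mem_insert_of_mem hc'))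
      (hx c' (mem_insert_of_mem hc')) (hsame hc').symm
  refine mem_chamberPatterns.2 ⟨z, Submodule.mem_inf.2 ⟨?_, ?_⟩, fun c' hc' => (hzC hc').1, ?_⟩
  · exact W.sub_mem (W.smul_mem _ hyW) (W.smul_mem _ hxW)
  · rw [Submodule.mem_orthogonal_singleton_iff_inner_left, hz]; ring
  · ext c'
    rw [mem_filter, ← hyS, mem_filter, mem_insert]
    constructor
    · rintro ⟨hc', h⟩; exact ⟨Or.inr hc', (hzC hc').2.1 h⟩
    · rintro ⟨rfl | hc', h⟩
      · exact absurd h hyc.not_gt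
      · exact ⟨hc', (hzC hc').2.2 h⟩

theorem card_chamberPatterns_insert_le [DecidableEq E] {C : Finset E} (W : Submodule ℝ E) {c : E}
    (hc : c ∉ C) :
    #(chamberPatterns (insert c C) W) ≤
      #(chamberPatterns C W) + #(chamberPatterns C (W ⊓ (ℝ ∙ c)ᗮ)) := by
  set 𝒜 := chamberPatterns (insert c C) W
  rw [← card_memberSubfamily_add_card_nonMemberSubfamily c 𝒜, ← card_union_add_card_inter]
  refine Nat.add_le_add (card_le_card ?_) (card_le_card ?_)
  · rw [memberSubfamily_union_nonMemberSubfamily]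
    intro S hS
    obtain ⟨T, hT, rfl⟩ := mem_image.1 hS
    exact erase_mem_chamberPatterns hc hT
  · intro S hS
    rw [mem_inter, mem_memberSubfamily, mem_nonMemberSubfamily] at hS
    exact mem_chamberPatterns_inf_orthogonal hc hS.1.2 hS.2.1 hS.1.1

theorem card_chamberPatterns_le [FiniteDimensional ℝ E] (C : Finset E) (W : Submodule ℝ E) :
    #(chamberPatterns C W) ≤ chamberBound #C (finrank ℝ W) := by
  classical
  induction C using Finset.induction_on generalizing W with
  | empty => simpa [chamberBound] using card_le_card (chamberPatterns_empty_subset W)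
  | @insert c C hc ih =>
    by_cases hW : W ≤ (ℝ ∙ c)ᗮ
    · simp [chamberPatterns_eq_empty_of_le_orthogonal (mem_insert_self c C) hW]
    have hlt : finrank ℝ ↥(W ⊓ (ℝ ∙ c)ᗮ) < finrank ℝ W :=
      Submodule.finrank_lt_finrank_of_lt (inf_lt_left.2 hW)
    obtain ⟨d, hd⟩ : ∃ d, finrank ℝ W = d + 1 := ⟨_, (Nat.succ_pred_eq_of_pos (by omega)).symm⟩
    rw [card_insert_of_notMem hc, hd]
    calc #(chamberPatterns (insert c C) W)
        ≤ #(chamberPatterns C W) + #(chamberPatterns C (W ⊓ (ℝ ∙ c)ᗮ)) :=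
          card_chamberPatterns_insert_le W hc
      _ ≤ chamberBound #C (d + 1) + chamberBound #C d :=
          Nat.add_le_add (hd ▸ ih W) ((ih _).trans (chamberBound_mono_right _ (by omega)))

theorem exists_forall_inner_ne_zero {C : Finset E} (hC : ∀ c ∈ C, c ≠ 0) :
    ∃ g : E, ∀ c ∈ C, ⟪g, c⟫ ≠ 0 := by
  by_contra! h
  obtain ⟨c, hc⟩ := Subspace.exists_eq_top_of_iUnion_eq_univ (k := ℝ)
    (p := fun c : C => LinearMap.ker (innerₛₗ ℝ (c : E)))
    (Set.eq_univ_of_forall fun g => by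
      obtain ⟨c, hc, hgc⟩ := h g
      exact Set.mem_iUnion.2 ⟨⟨c, hc⟩, by simpa [real_inner_comm] using hgc⟩)
  exact hC c c.2 (by simpa using LinearMap.congr_fun (LinearMap.ker_eq_top.1 hc) c)

theorem exists_forall_inner_ne_zero_and_mul_nonneg {C : Finset E} (hC : ∀ c ∈ C, c ≠ 0) (x : E) :
    ∃ y : E, ∀ c ∈ C, ⟪y, c⟫ ≠ 0 ∧ 0 ≤ ⟪x, c⟫ * ⟪y, c⟫ := by
  obtain ⟨g, hg⟩ := exists_forall_inner_ne_zero hC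
  have hinner (t : ℝ) (c : E) : ⟪x + t • g, c⟫ = ⟪x, c⟫ + t * ⟪g, c⟫ := by
    rw [inner_add_left, real_inner_smul_left]
  suffices ∀ᶠ t in 𝓝[>] (0 : ℝ), ∀ c ∈ C, ⟪x + t • g, c⟫ ≠ 0 ∧ 0 ≤ ⟪x, c⟫ * ⟪x + t • g, c⟫ from
    let ⟨t, ht⟩ := this.exists; ⟨x + t • g, ht⟩
  refine (eventually_all_finset C).2 fun c hc => ?_
  by_cases hxc : ⟪x, c⟫ = 0
  · filter_upwards [self_mem_nhdsWithin] with t (ht : 0 < t)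
    simp [hinner, hxc, ht.ne', hg c hc]
  · have hcont : Continuous fun t : ℝ => ⟪x, c⟫ * (⟪x, c⟫ + t * ⟪g, c⟫) := by fun_prop
    have h0 : 0 < ⟪x, c⟫ * (⟪x, c⟫ + 0 * ⟪g, c⟫) := by
      rw [zero_mul, add_zero]; exact mul_self_pos.2 hxc
    filter_upwards [nhdsWithin_le_nhds (continuousAt_const.eventually_lt hcont.continuousAt h0)]
      with t ht
    rw [hinner]
    exact ⟨right_ne_zero_of_mul ht.ne', ht.le⟩

end ChamberPatterns

theorem card_le_two_pow_of_forall_apply_eq_or_eq_neg {k : ℕ}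
    {s : Finset (EuclideanSpace ℝ (Fin k))} {a : ℝ} (hs : ∀ v ∈ s, ∀ j, v j = a ∨ v j = -a) :
    #s ≤ 2 ^ k := by
  classical
  have hsub : s ⊆ univ.image fun b : Fin k → Bool =>
      WithLp.toLp 2 fun j => if b j then a else -a := by
    intro v hv
    refine mem_image.2 ⟨fun j => decide (v j = a), mem_univ _, ?_⟩
    ext j
    by_cases ha : v j = a
    · simp [ha]
    · simpa [(hs v hv j).resolve_left ha] using Eq.symm
  calc #s ≤ #(univ : Finset (Fin k → Bool)) := (card_le_card hsub).trans card_image_le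
    _ = 2 ^ k := by simp

section Rows

variable {n k : ℕ} (V : Fin k → EuclideanSpace ℝ (Fin n))

def matrixRow (i : Fin n) : EuclideanSpace ℝ (Fin k) := WithLp.toLp 2 fun j => V j i

open Classical in
noncomputable def signVector (S : Finset (EuclideanSpace ℝ (Fin k))) : EuclideanSpace ℝ (Fin n) :=
  WithLp.toLp 2 fun i => if matrixRow V i ∈ S then 1 / Real.sqrt n else -(1 / Real.sqrt n)

variable {V}

theorem exists_forall_apply_eq_inner_matrixRow {U : EuclideanSpace ℝ (Fin n)}
    (hU : U ∈ Submodule.span ℝ (Set.range V)) :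
    ∃ x : EuclideanSpace ℝ (Fin k), ∀ i, U i = ⟪x, matrixRow V i⟫ := by
  obtain ⟨x, rfl⟩ := (Submodule.mem_span_range_iff_exists_fun ℝ).1 hU
  refine ⟨WithLp.toLp 2 x, fun i => ?_⟩
  simp [matrixRow, PiLp.inner_apply, mul_comm]

theorem matrixRow_ne_zero (hk : 0 < k) (hV : ∀ j, V j ∈ scaledCube n) (i : Fin n) :
    matrixRow V i ≠ 0 := by
  have hn : (0 : ℝ) < n := by exact_mod_cast i.pos
  intro h
  have h0 : V ⟨0, hk⟩ i = 0 := congrArg (· ⟨0, hk⟩) h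
  rcases hV ⟨0, hk⟩ i with h1 | h1 <;> rw [h1] at h0 <;> simp [hn.ne'] at h0

theorem card_image_matrixRow_le (hV : ∀ j, V j ∈ scaledCube n) :
    #(univ.image (matrixRow V)) ≤ 2 ^ k := by
  refine card_le_two_pow_of_forall_apply_eq_or_eq_neg (a := 1 / Real.sqrt n) fun v hv j => ?_
  obtain ⟨i, -, rfl⟩ := mem_image.1 hv
  exact hV j i

theorem mul_signVector_apply_nonneg {x y : EuclideanSpace ℝ (Fin k)}
    (hy : ∀ i, ⟪y, matrixRow V i⟫ ≠ 0 ∧ 0 ≤ ⟪x, matrixRow V i⟫ * ⟪y, matrixRow V i⟫) (i : Fin n) :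
    0 ≤ ⟪x, matrixRow V i⟫ * signVector V {c ∈ univ.image (matrixRow V) | 0 < ⟪y, c⟫} i := by
  have hsqrt : 0 ≤ 1 / Real.sqrt n := by positivity
  obtain ⟨hne, hnn⟩ := hy i
  rcases hne.lt_or_gt with h | h
  · simp only [signVector, mem_filter, h.not_gt, and_false, ↓reduceIte]
    nlinarith
  · simp only [signVector, mem_filter, mem_image_of_mem _ (mem_univ i), h, and_self, ↓reduceIte]
    nlinarith

theorem signVector_mem_scaledCube (S : Finset (EuclideanSpace ℝ (Fin k))) :
    signVector V S ∈ scaledCube n := by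
  intro i
  by_cases h : matrixRow V i ∈ S <;> simp [signVector, h]

end Rows

theorem one_le_mul_sub_sq {n : ℕ} {W Y : EuclideanSpace ℝ (Fin n)} (hW : W ∈ scaledCube n)
    (hY : Y ∈ scaledCube n) {i : Fin n} (hWY : W i ≠ Y i) {u : ℝ} (hu : 0 ≤ u * Y i) :
    1 ≤ n * (W i - u) ^ 2 := by
  have hn : (0 : ℝ) < n := by exact_mod_cast i.pos
  have hY2 : n * Y i ^ 2 = 1 := by
    rcases hY i with h | h <;> rw [h] <;> field_simp <;> simp [Real.sq_sqrt hn.le]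
  have hWY' : W i = -Y i := by
    rcases hW i with h | h <;> rcases hY i with h' | h' <;> simp_all
  rw [hWY', ← hY2]
  nlinarith [mul_nonneg hn.le hu, mul_nonneg hn.le (sq_nonneg u)]

theorem card_ne_le_mul_dist_sq {n : ℕ} {W Y U : EuclideanSpace ℝ (Fin n)} (hW : W ∈ scaledCube n)
    (hY : Y ∈ scaledCube n) (hUY : ∀ i, 0 ≤ U i * Y i) :
    (#{i | W i ≠ Y i} : ℝ) ≤ n * dist W U ^ 2 := by
  rw [EuclideanSpace.dist_eq, Real.sq_sqrt (by positivity), mul_sum]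
  calc (#{i | W i ≠ Y i} : ℝ) = ∑ i ∈ {i | W i ≠ Y i}, 1 := by simp
    _ ≤ ∑ i ∈ {i | W i ≠ Y i}, n * dist (W i) (U i) ^ 2 := by
      refine sum_le_sum fun i hi => ?_
      rw [Real.dist_eq, sq_abs]
      exact one_le_mul_sub_sq hW hY (mem_filter.1 hi).2 (hUY i)
    _ ≤ ∑ i, n * dist (W i) (U i) ^ 2 :=
      sum_le_sum_of_subset_of_nonneg (subset_univ _) fun _ _ _ => by positivity

theorem stmt13_general (n k : ℕ) (hk : 0 < k)
    (V : Fin k → EuclideanSpace ℝ (Fin n)) (hV : ∀ i, V i ∈ scaledCube n)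
    (r : ℝ) :
    ∃ cover : Finset (EuclideanSpace ℝ (Fin n)),
      (∀ Y ∈ cover, Y ∈ scaledCube n) ∧ cover.card ≤ 2 ^ (k ^ 2) ∧
      ∀ W ∈ scaledCube n,
        infDist W (Submodule.span ℝ (Set.range V) : Set (EuclideanSpace ℝ (Fin n))) ≤ r →
        ∃ Y ∈ cover,
          ((Finset.univ.filter fun i => W i ≠ Y i).card : ℝ) ≤ r ^ 2 * n := by
  set C := univ.image (matrixRow V)
  have hC : ∀ c ∈ C, c ≠ 0 := by simpa [C] using matrixRow_ne_zero hk hV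
  refine ⟨(chamberPatterns C ⊤).image (signVector V), by simp [signVector_mem_scaledCube],
    ?_, fun W hW hWr => ?_⟩
  · calc #((chamberPatterns C ⊤).image (signVector V)) ≤ #(chamberPatterns C ⊤) := card_image_le
      _ ≤ chamberBound #C k := by simpa using card_chamberPatterns_le C ⊤
      _ ≤ 2 ^ (k ^ 2) := chamberBound_le_two_pow_sq (card_image_matrixRow_le hV) hk
  obtain ⟨U, hU, hWU⟩ := (Submodule.span ℝ (Set.range V)).closed_of_finiteDimensional
    |>.exists_infDist_eq_dist ⟨0, Submodule.zero_mem _⟩ W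
  obtain ⟨x, hx⟩ := exists_forall_apply_eq_inner_matrixRow hU
  obtain ⟨y, hy⟩ := exists_forall_inner_ne_zero_and_mul_nonneg hC x
  have hS : {c ∈ C | 0 < ⟪y, c⟫} ∈ chamberPatterns C ⊤ :=
    mem_chamberPatterns.2 ⟨y, Submodule.mem_top, fun c hc => (hy c hc).1, rfl⟩
  refine ⟨_, mem_image_of_mem _ hS, ?_⟩
  have hUY (i : Fin n) : 0 ≤ U i * signVector V {c ∈ C | 0 < ⟪y, c⟫} i :=
    hx i ▸ mul_signVector_apply_nonneg (fun i => hy _ (mem_image_of_mem _ (mem_univ i))) i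
  calc _ ≤ n * dist W U ^ 2 := card_ne_le_mul_dist_sq hW (signVector_mem_scaledCube _) hUY
    _ ≤ r ^ 2 * n := by
      rw [mul_comm]
      gcongr
      exact hWU ▸ hWr

/-- Covering lemma: for any k points V^(1), …, V^(k) of the scaled hypercube and any r ≥ 0,
there is a set `cover` of at most 2^{k²} hypercube points such that every hypercube point V
within Euclidean distance r of span{V^(1), …, V^(k)} is within Hamming distance r²n of some
point of `cover`. -/
theorem stmt13 (n k : ℕ) (hn : 0 < n) (hk : 0 < k)
    (V : Fin k → EuclideanSpace ℝ (Fin n)) (hV : ∀ i, V i ∈ scaledCube n)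
    (r : ℝ) (hr : 0 ≤ r) :
    ∃ cover : Finset (EuclideanSpace ℝ (Fin n)),
      (∀ Y ∈ cover, Y ∈ scaledCube n) ∧ cover.card ≤ 2 ^ (k ^ 2) ∧
      ∀ W ∈ scaledCube n,
        infDist W (Submodule.span ℝ (Set.range V) : Set (EuclideanSpace ℝ (Fin n))) ≤ r →
        ∃ Y ∈ cover,
          ((Finset.univ.filter fun i => W i ≠ Y i).card : ℝ) ≤ r ^ 2 * n :=
  stmt13_general n k hk V hV r
end

section
/- For every positive integer h there exist constants γ₁ = γ₁(h) > 0 and γ₂ = γ₂(h) > 0, depending only on h, with the following property: for every positive integer n, every set A = {V^(1), …, V^(k)} ⊆ {−1/√n, 1/√n}^n with k ≤ h, and every V ∈ {−1/√n, 1/√n}^n, there exist real numbers β₁, …, β_k with |β_i| ≤ γ₁ for all i such that the vector U = β₁V^(1) + ⋯ + β_kV^(k) satisfies ‖V − U‖₂ ≤ γ₂ · dist_{ℓ₂}(V, span(A)). -/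
open Metric

open Filter Submodule Set
open scoped RealInnerProductSpace

/-!
The orthogonal projection `P W` of `W` onto `span A` realises the distance, so `γ₂ = 1` and only
the coefficients of `P W` need bounding. Adding the vectors of `A` one at a time, the projection
grows by the projection onto the residual `z = v - P v` of the new vector `v`, i.e. by
`⟪z, W⟫ / ‖z‖² • z`. If `|⟪z, w⟫| ≤ C ‖z‖²` for all such residuals and all cube vectors `w`, the
coefficients therefore stay below `(1 + C) ^ k`.

As `|⟪z, w⟫| ≤ n^{-1/2} ‖z‖₁`, it suffices to show `n^{-1/2} ‖z‖₁ ≤ C ‖z‖₂²` with `C` depending only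
on the number `d` of vectors already added. After rescaling to `±1` entries, `z i = u i - t i` with
`t i = ∑ⱼ αⱼ vⱼ i`. Splitting the `2 ^ d` sign patterns `σ` according to whether `∑ⱼ αⱼ σⱼ` lies
above `1`, below `-1` or in `[-1, 1]` gives only finitely many splits as `α` varies, so some `g`
induces the same split as `α` with its values outside `[-1, 1]` at distance at least
`δ = δ(d) > 0` from `±1`. This gives `δ |z i| ≤ (δ + 2) z i u i - 2 z i (∑ⱼ gⱼ vⱼ i)`
coordinatewise, and summing, orthogonality of `z` to the `vⱼ` leaves `δ ‖z‖₁ ≤ (δ + 2) ‖z‖₂²`.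
-/

theorem exists_pos_forall_le_of_finite {α : Type*} [Finite α] (c : α → ℝ)
    (hc : ∀ a, 0 < c a) : ∃ δ > 0, ∀ a, δ ≤ c a := by
  cases isEmpty_or_nonempty α
  · exact ⟨1, one_pos, isEmptyElim⟩
  · obtain ⟨a₀, ha₀⟩ := Finite.exists_min c
    exact ⟨c a₀, hc a₀, ha₀⟩

theorem exists_threshold_certificate {ι A : Type*} [Finite ι] (φ : ι → A → ℝ) :
    ∃ δ > 0, ∀ a, ∃ a', ∀ i, (1 < φ i a → 1 + δ ≤ φ i a') ∧
      (φ i a < -1 → φ i a' ≤ -(1 + δ)) ∧ (|φ i a| ≤ 1 → |φ i a'| ≤ 1) := by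
  have margin : ∀ a, ∃ δ > 0, ∀ i, 1 < |φ i a| → 1 + δ ≤ |φ i a| := fun a => by
    obtain ⟨δ, hδ, hle⟩ := exists_pos_forall_le_of_finite
      (fun i => if 1 < |φ i a| then |φ i a| - 1 else 1) fun i => by split_ifs <;> linarith
    refine ⟨δ, hδ, fun i hi => ?_⟩
    have := hle i
    rw [if_pos hi] at this
    linarith
  choose δ hδ hmargin using margin
  let pattern : A → ι → Prop × Prop := fun a i => (1 < φ i a, φ i a < -1)
  have hrep : ∀ p : range pattern, ∃ a, pattern a = p := fun p => p.2
  choose rep hrep using hrep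
  obtain ⟨δ₀, hδ₀, hle⟩ := exists_pos_forall_le_of_finite (fun p => δ (rep p)) fun p => hδ _
  refine ⟨δ₀, hδ₀, fun a => ⟨rep ⟨pattern a, a, rfl⟩, fun i => ?_⟩⟩
  set a' := rep ⟨pattern a, a, rfl⟩
  have hpat := congrFun (hrep ⟨pattern a, a, rfl⟩) i
  simp only [pattern, Prod.mk.injEq] at hpat
  have hgt : 1 < φ i a' ↔ 1 < φ i a := hpat.1.to_iff
  have hlt : φ i a' < -1 ↔ φ i a < -1 := hpat.2.to_iff
  have hδa' : δ₀ ≤ δ a' := hle _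
  have hm := hmargin a' i
  refine ⟨fun h => ?_, fun h => ?_, fun h => ?_⟩
  · have h' := hgt.2 h
    rw [abs_of_pos (by linarith)] at hm
    linarith [hm (by linarith)]
  · have h' := hlt.2 h
    rw [abs_of_neg (by linarith)] at hm
    linarith [hm (by linarith)]
  · rw [abs_le] at h ⊢
    constructor
    · by_contra hc; linarith [hlt.1 (by linarith)]
    · by_contra hc; linarith [hgt.1 (by linarith)]

theorem mul_abs_sub_le_of_threshold {δ e t r : ℝ} (hδ : 0 < δ) (he : e = 1 ∨ e = -1)
    (h₁ : 1 < t → 1 + δ ≤ r) (h₂ : t < -1 → r ≤ -(1 + δ)) (h₃ : |t| ≤ 1 → |r| ≤ 1) :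
    δ * |e - t| ≤ (δ + 2) * ((e - t) * e) - 2 * ((e - t) * r) := by
  rcases lt_trichotomy 1 t with ht | ht | ht
  · have := h₁ ht
    rcases he with rfl | rfl
    · rw [abs_of_neg (by linarith)]; nlinarith
    · rw [abs_of_neg (by linarith)]; nlinarith
  · have := abs_le.1 (h₃ (by rw [← ht]; norm_num))
    rcases he with rfl | rfl
    · subst ht; simp
    · rw [abs_of_neg (by linarith)]; nlinarith
  · rcases lt_or_ge t (-1) with ht' | ht'
    · have := h₂ ht'
      rcases he with rfl | rfl
      · rw [abs_of_pos (by linarith)]; nlinarith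
      · rw [abs_of_pos (by linarith)]; nlinarith
    · have := abs_le.1 (h₃ (abs_le.2 ⟨ht', ht.le⟩))
      rcases he with rfl | rfl
      · rw [abs_of_nonneg (by linarith)]; nlinarith
      · rw [abs_of_nonpos (by linarith)]; nlinarith

theorem eq_mul_sign_of_eq_or_eq_neg {s x : ℝ} (hs : 0 < s) (hx : x = s ∨ x = -s) :
    x = s * SignType.sign x := by
  rcases hx with rfl | rfl <;> simp [hs]

theorem sign_eq_one_or_eq_neg_one {s x : ℝ} (hs : 0 < s) (hx : x = s ∨ x = -s) :
    (SignType.sign x : ℝ) = 1 ∨ (SignType.sign x : ℝ) = -1 := by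
  rcases hx with rfl | rfl <;> simp [hs]

namespace EuclideanSpace

theorem inner_eq_sum_mul {ι : Type*} [Fintype ι] (x y : EuclideanSpace ℝ ι) :
    ⟪x, y⟫ = ∑ i, x i * y i := by
  simp [PiLp.inner_apply, mul_comm]

theorem abs_inner_le_mul_sum_abs {ι : Type*} [Fintype ι] {s : ℝ} (x y : EuclideanSpace ℝ ι)
    (hy : ∀ i, |y i| ≤ s) : |⟪x, y⟫| ≤ s * ∑ i, |x i| := by
  rw [inner_eq_sum_mul, Finset.mul_sum]
  refine (Finset.abs_sum_le_sum_abs _ _).trans (Finset.sum_le_sum fun i _ => ?_)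
  rw [abs_mul, mul_comm s]
  exact mul_le_mul_of_nonneg_left (hy i) (abs_nonneg _)

theorem sum_smul_apply {ι κ : Type*} [Fintype κ] (c : κ → ℝ) (v : κ → EuclideanSpace ℝ ι)
    (i : ι) : (∑ j, c j • v j) i = ∑ j, c j * v j i := by
  simp only [WithLp.ofLp_sum, WithLp.ofLp_smul, Finset.sum_apply, Pi.smul_apply, smul_eq_mul]

end EuclideanSpace

theorem eventually_mul_sum_abs_le_norm_sq (d : ℕ) :
    ∀ᶠ C in atTop, ∀ {ι : Type*} [Fintype ι] (s : ℝ) (v : Fin d → EuclideanSpace ℝ ι)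
      (u z : EuclideanSpace ℝ ι), 0 < s → (∀ j i, v j i = s ∨ v j i = -s) →
      (∀ i, u i = s ∨ u i = -s) → u - z ∈ span ℝ (range v) → z ∈ (span ℝ (range v))ᗮ →
      s * ∑ i, |z i| ≤ C * ‖z‖ ^ 2 := by
  obtain ⟨δ, hδ, hcert⟩ :=
    exists_threshold_certificate fun (σ : Fin d → SignType) (α : Fin d → ℝ) => ∑ j, α j * σ j
  filter_upwards [eventually_ge_atTop (1 + 2 / δ)] with C hC ι _ s v u z hs hv hu hspan horth
  obtain ⟨α, hα⟩ := (mem_span_range_iff_exists_fun ℝ).1 hspan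
  obtain ⟨g, hg⟩ := hcert α
  set y := ∑ j, g j • v j
  have hzy : ⟪z, y⟫ = 0 := by
    rw [real_inner_comm]
    exact inner_right_of_mem_orthogonal
      (sum_mem fun j _ => smul_mem _ _ (subset_span (mem_range_self j))) horth
  have hzu : ⟪z, u⟫ = ‖z‖ ^ 2 := by
    rw [← real_inner_self_eq_norm_sq, ← sub_eq_zero, ← inner_sub_right, real_inner_comm]
    exact inner_right_of_mem_orthogonal hspan horth
  -- in coordinate `i`, divide by `s` to land on the sign pattern `σ`, where `g` is a certificate
  have hpoint : ∀ i, δ * s * |z i| ≤ (δ + 2) * (z i * u i) - 2 * (z i * y i) := by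
    intro i
    let σ : Fin d → SignType := fun j => SignType.sign (v j i)
    set e : ℝ := ((SignType.sign (u i) : SignType) : ℝ)
    set t := ∑ j, α j * σ j
    set r := ∑ j, g j * σ j
    have hvσ : ∀ j, v j i = s * σ j := fun j => eq_mul_sign_of_eq_or_eq_neg hs (hv j i)
    have hui : u i = s * e := eq_mul_sign_of_eq_or_eq_neg hs (hu i)
    have hzi : z i = s * (e - t) := by
      have : (u - z) i = s * t := by
        rw [← hα, EuclideanSpace.sum_smul_apply, Finset.mul_sum]
        exact Finset.sum_congr rfl fun j _ => by rw [hvσ]; ring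
      rw [PiLp.sub_apply, hui] at this
      linarith
    have hyi : y i = s * r := by
      rw [EuclideanSpace.sum_smul_apply, Finset.mul_sum]
      exact Finset.sum_congr rfl fun j _ => by rw [hvσ]; ring
    have key := mul_abs_sub_le_of_threshold hδ (sign_eq_one_or_eq_neg_one hs (hu i))
      (hg σ).1 (hg σ).2.1 (hg σ).2.2
    rw [hzi, hui, hyi, abs_mul, abs_of_pos hs]
    nlinarith [mul_le_mul_of_nonneg_left key (sq_nonneg s)]
  have hsum : δ * (s * ∑ i, |z i|) ≤ (δ + 2) * ‖z‖ ^ 2 := by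
    calc δ * (s * ∑ i, |z i|) = ∑ i, δ * s * |z i| := by simp only [Finset.mul_sum, mul_assoc]
      _ ≤ ∑ i, ((δ + 2) * (z i * u i) - 2 * (z i * y i)) := Finset.sum_le_sum fun i _ => hpoint i
      _ = (δ + 2) * ⟪z, u⟫ - 2 * ⟪z, y⟫ := by
        simp only [EuclideanSpace.inner_eq_sum_mul, Finset.sum_sub_distrib, Finset.mul_sum]
      _ = (δ + 2) * ‖z‖ ^ 2 := by rw [hzu, hzy]; ring
  calc s * ∑ i, |z i| ≤ (δ + 2) / δ * ‖z‖ ^ 2 := by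
        rw [div_mul_eq_mul_div, le_div_iff₀ hδ]; linarith
    _ = (1 + 2 / δ) * ‖z‖ ^ 2 := by field_simp
    _ ≤ C * ‖z‖ ^ 2 := by gcongr

section Projection

variable {𝕜 E : Type*} [RCLike 𝕜] [NormedAddCommGroup E] [InnerProductSpace 𝕜 E]

instance Submodule.finiteDimensional_span_range {ι : Type*} [Finite ι] (v : ι → E) :
    FiniteDimensional 𝕜 (span 𝕜 (range v)) :=
  FiniteDimensional.span_of_finite 𝕜 (finite_range v)

theorem starProjection_span_range_snoc {k : ℕ} (V : Fin k → E) (v w : E) :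
    (span 𝕜 (range (Fin.snoc V v : Fin (k + 1) → E))).starProjection w =
      (span 𝕜 (range V)).starProjection w +
        (𝕜 ∙ (v - (span 𝕜 (range V)).starProjection v)).starProjection w := by
  set K := span 𝕜 (range V)
  set z := v - K.starProjection v
  have hzK : 𝕜 ∙ z ≤ Kᗮ :=
    (span_singleton_le_iff_mem _ _).2 (K.sub_starProjection_mem_orthogonal v)
  have hPK : K.starProjection w ∈ (𝕜 ∙ z)ᗮ :=
    orthogonal_le hzK (K.le_orthogonal_orthogonal (K.starProjection_apply_mem w))
  apply eq_starProjection_of_mem_orthogonal <;> rw [Fin.range_snoc, span_insert]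
  · have hz : z ∈ 𝕜 ∙ v ⊔ K :=
      sub_mem (mem_sup_left (mem_span_singleton_self v))
        (mem_sup_right (K.starProjection_apply_mem v))
    exact add_mem (mem_sup_right (K.starProjection_apply_mem w))
      ((span_singleton_le_iff_mem _ _).2 hz ((𝕜 ∙ z).starProjection_apply_mem w))
  · have hv : 𝕜 ∙ v ⊔ K ≤ 𝕜 ∙ z ⊔ K := by
      refine sup_le ((span_singleton_le_iff_mem _ _).2 ?_) le_sup_right
      simpa [z] using add_mem (mem_sup_left (mem_span_singleton_self z))
        (mem_sup_right (K.starProjection_apply_mem v) : K.starProjection v ∈ 𝕜 ∙ z ⊔ K)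
    refine orthogonal_le hv ?_
    rw [← inf_orthogonal]
    constructor
    · simpa [sub_add_eq_sub_sub_swap] using
        sub_mem ((𝕜 ∙ z).sub_starProjection_mem_orthogonal w) hPK
    · simpa [sub_add_eq_sub_sub] using
        sub_mem (K.sub_starProjection_mem_orthogonal w) (hzK ((𝕜 ∙ z).starProjection_apply_mem w))

theorem Submodule.norm_sub_starProjection_eq_infDist (K : Submodule 𝕜 E)
    [K.HasOrthogonalProjection] (w : E) : ‖w - K.starProjection w‖ = infDist w K := by
  rw [infDist_eq_iInf, starProjection_minimal]
  simp [dist_eq_norm]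

end Projection

theorem exists_abs_le_starProjection_eq_sum {E : Type*} [NormedAddCommGroup E]
    [InnerProductSpace ℝ E] {S : Set E} {C : ℝ} (hC : 0 ≤ C) {k : ℕ}
    (hS : ∀ d < k, ∀ v : Fin d → E, (∀ j, v j ∈ S) → ∀ u ∈ S, ∀ w ∈ S,
      |⟪u - (span ℝ (range v)).starProjection u, w⟫| ≤
        C * ‖u - (span ℝ (range v)).starProjection u‖ ^ 2)
    (V : Fin k → E) (hV : ∀ j, V j ∈ S) {w : E} (hw : w ∈ S) :
    ∃ β : Fin k → ℝ, (∀ j, |β j| ≤ (1 + C) ^ k - 1) ∧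
      (span ℝ (range V)).starProjection w = ∑ j, β j • V j := by
  induction k generalizing w with
  | zero => exact ⟨0, fun j => j.elim0, by simp⟩
  | succ k ih =>
    obtain ⟨V, v, rfl⟩ : ∃ V' v, V = Fin.snoc V' v :=
      ⟨Fin.init V, V (Fin.last k), (Fin.snoc_init_self V).symm⟩
    have hV' : ∀ j, V j ∈ S := fun j => by simpa using hV j.castSucc
    have hv : v ∈ S := by simpa using hV (Fin.last k)
    have hS' : ∀ d < k, _ := fun d hd => hS d (hd.trans k.lt_succ_self)
    obtain ⟨β₁, hβ₁, hw'⟩ := ih hS' V hV' hw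
    obtain ⟨β₂, hβ₂, hv'⟩ := ih hS' V hV' hv
    set z := v - (span ℝ (range V)).starProjection v
    set θ := ⟪z, w⟫ / ‖z‖ ^ 2
    have hθ : |θ| ≤ C := by
      rw [abs_div, abs_of_nonneg (sq_nonneg ‖z‖)]
      exact div_le_of_le_mul₀ (by positivity) hC (hS k k.lt_succ_self V hV' v hv w hw)
    refine ⟨Fin.snoc (fun j => β₁ j - θ * β₂ j) θ, fun j => ?_, ?_⟩
    · have hpow : (1 + C) ^ (k + 1) = (1 + C) * ((1 + C) ^ k - 1) + (1 + C) := by ring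
      have hone : 1 ≤ (1 + C) ^ k := one_le_pow₀ (by linarith)
      refine Fin.lastCases ?_ (fun j => ?_) j
      · simp only [Fin.snoc_last]; nlinarith
      · simp only [Fin.snoc_castSucc]
        calc |β₁ j - θ * β₂ j| ≤ |β₁ j| + |θ| * |β₂ j| := by
              rw [← abs_mul]; exact abs_sub _ _
          _ ≤ ((1 + C) ^ k - 1) + C * ((1 + C) ^ k - 1) := by
              gcongr
              · exact hβ₁ j
              · exact hβ₂ j
          _ ≤ (1 + C) ^ (k + 1) - 1 := by nlinarith
    · rw [starProjection_span_range_snoc, starProjection_singleton, hw']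
      simp only [Fin.sum_univ_castSucc, Fin.snoc_castSucc, Fin.snoc_last, sub_smul, mul_smul,
        Finset.sum_sub_distrib, ← Finset.smul_sum, ← hv', RCLike.ofReal_real_eq_id, id]
      module

theorem stmt14_general (h : ℕ) :
    ∃ γ₁ γ₂ : ℝ, 0 < γ₁ ∧ 0 < γ₂ ∧
      ∀ n : ℕ, 0 < n → ∀ k : ℕ, 0 < k → k ≤ h →
        ∀ V : Fin k → EuclideanSpace ℝ (Fin n), (∀ i, V i ∈ scaledCube n) →
          ∀ W : EuclideanSpace ℝ (Fin n), W ∈ scaledCube n →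
            ∃ β : Fin k → ℝ, (∀ i, |β i| ≤ γ₁) ∧
              ‖W - ∑ i, β i • V i‖ ≤
                γ₂ * infDist W (Submodule.span ℝ (Set.range V) : Set (EuclideanSpace ℝ (Fin n))) := by
  obtain ⟨C, hC, hC₀⟩ := (((eventually_all_finite (finite_Iio h)).2 fun d _ =>
    eventually_mul_sum_abs_le_norm_sq.{0} d).and (eventually_ge_atTop 0)).exists
  refine ⟨(1 + C) ^ h, 1, by positivity, one_pos, fun n hn k _ hkh V hV W hW => ?_⟩
  have hs : 0 < 1 / √(n : ℝ) := by positivity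
  refine (exists_abs_le_starProjection_eq_sum (S := scaledCube n) hC₀
    (fun d hd v hv u hu w hw => ?_) V hV hW).imp fun β ⟨hβ, hPW⟩ =>
      ⟨fun j => (hβ j).trans (by linarith [pow_le_pow_right₀ (by linarith : 1 ≤ 1 + C) hkh]),
        by rw [one_mul, ← hPW, norm_sub_starProjection_eq_infDist]⟩
  set P := (span ℝ (range v)).starProjection
  calc |⟪u - P u, w⟫| ≤ 1 / √(n : ℝ) * ∑ i, |(u - P u) i| :=
        EuclideanSpace.abs_inner_le_mul_sum_abs _ _ fun i => by
          rcases hw i with hwi | hwi <;> rw [hwi] <;> simp only [abs_neg, abs_of_pos hs, le_refl]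
    _ ≤ C * ‖u - P u‖ ^ 2 := hC d (hd.trans_le hkh) _ v u _ hs hv hu (by simp [P])
        ((span ℝ (range v)).sub_starProjection_mem_orthogonal u)

/-- Low-weight near-best approximation: for every h there are constants γ₁, γ₂ > 0 depending
only on h such that for every n, every family of k ≤ h hypercube points V^(1), …, V^(k) and
every hypercube point V, some linear combination U = ∑ β_i V^(i) with all |β_i| ≤ γ₁ satisfies
‖V − U‖₂ ≤ γ₂ · dist(V, span{V^(1), …, V^(k)}). -/
theorem stmt14 (h : ℕ) (hh : 0 < h) :
    ∃ γ₁ γ₂ : ℝ, 0 < γ₁ ∧ 0 < γ₂ ∧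
      ∀ n : ℕ, 0 < n → ∀ k : ℕ, 0 < k → k ≤ h →
        ∀ V : Fin k → EuclideanSpace ℝ (Fin n), (∀ i, V i ∈ scaledCube n) →
          ∀ W : EuclideanSpace ℝ (Fin n), W ∈ scaledCube n →
            ∃ β : Fin k → ℝ, (∀ i, |β i| ≤ γ₁) ∧
              ‖W - ∑ i, β i • V i‖ ≤
                γ₂ * infDist W (Submodule.span ℝ (Set.range V) : Set (EuclideanSpace ℝ (Fin n))) :=
  stmt14_general h
end

section
/- Let f, g : {−1,1}^n → {−1,1} with g monotone, i.e., g(X) ≤ g(Y) whenever X ≺ Y in the bitwise partial order on {−1,1}^n. Then Pr_{x uniform in {−1,1}^n}[f(x) ≠ g(x)] ≥ (1/4) · Σ_{i : f̂(i) < 0} f̂(i)², where f̂(i) := E_{x uniform}[f(x)·x_i] is the degree-1 Fourier coefficient of f on coordinate i, and the sum ranges over all i ∈ [n] with f̂(i) < 0. -/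
/-- The ±1 encoding of a Boolean value. -/
def chi (b : Bool) : ℝ := if b then 1 else -1

lemma chi_not (b : Bool) : chi (!b) = - chi b := by cases b <;> simp [chi]

lemma chi_mul_self (b : Bool) : chi b * chi b = 1 := by cases b <;> simp [chi]

/-- The involution flipping coordinate `i`. -/
def flipP (n : ℕ) (i : Fin n) : Equiv.Perm (Fin n → Bool) :=
  Function.Involutive.toPerm (fun x => Function.update x i (!x i))
    (by
      intro x
      funext j
      by_cases h : j = i
      · subst h; simp
      · simp [Function.update_of_ne h])

lemma flipP_apply (n : ℕ) (i j : Fin n) (x : Fin n → Bool) :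
    flipP n i x j = if j = i then !x i else x j := by
  by_cases h : j = i
  · subst h; simp [flipP, Function.Involutive.toPerm]
  · simp [flipP, Function.Involutive.toPerm, Function.update_of_ne h, h]

lemma orth (n : ℕ) (i j : Fin n) :
    ∑ x : Fin n → Bool, chi (x i) * chi (x j) =
      if i = j then (2:ℝ)^n else 0 := by
  split_ifs with h
  · subst h
    simp_rw [chi_mul_self]
    simp [Finset.card_univ]
  · have hS := Equiv.sum_comp (flipP n i) (fun x : Fin n → Bool => chi (x i) * chi (x j))
    have he : ∀ x : Fin n → Bool,
        chi (flipP n i x i) * chi (flipP n i x j) = -(chi (x i) * chi (x j)) := by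
      intro x
      rw [flipP_apply, flipP_apply, if_pos rfl, if_neg (Ne.symm h), chi_not, neg_mul]
    simp only [he] at hS
    rw [Finset.sum_neg_distrib] at hS
    linarith

lemma mono_nonneg (n : ℕ) (g : (Fin n → Bool) → ℝ)
    (hgmono : ∀ x y : Fin n → Bool, (∀ i, chi (x i) ≤ chi (y i)) → g x ≤ g y)
    (i : Fin n) : 0 ≤ ∑ x : Fin n → Bool, g x * chi (x i) := by
  have hS := Equiv.sum_comp (flipP n i) (fun x : Fin n → Bool => g x * chi (x i))
  have h2 : (2:ℝ) * ∑ x : Fin n → Bool, g x * chi (x i)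
      = ∑ x : Fin n → Bool, (g x * chi (x i) + g (flipP n i x) * chi (flipP n i x i)) := by
    rw [Finset.sum_add_distrib, hS]; ring
  have hterm : ∀ x : Fin n → Bool,
      0 ≤ g x * chi (x i) + g (flipP n i x) * chi (flipP n i x i) := by
    intro x
    have hfl : flipP n i x i = !x i := by rw [flipP_apply, if_pos rfl]
    cases hxi : x i
    · have hle : g x ≤ g (flipP n i x) := by
        apply hgmono
        intro j
        rw [flipP_apply]
        by_cases hj : j = i
        · subst hj; rw [if_pos rfl, hxi]; simp [chi]
        · rw [if_neg hj]
      rw [hfl, hxi]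
      simp only [chi]
      norm_num
      linarith
    · have hle : g (flipP n i x) ≤ g x := by
        apply hgmono
        intro j
        rw [flipP_apply]
        by_cases hj : j = i
        · subst hj; rw [if_pos rfl, hxi]; simp [chi]
        · rw [if_neg hj]
      rw [hfl, hxi]
      simp only [chi]
      norm_num
      linarith
  have h3 := Finset.sum_nonneg (fun x (_ : x ∈ (Finset.univ : Finset (Fin n → Bool))) => hterm x)
  linarith [h2, h3]

lemma bessel (n : ℕ) (h : (Fin n → Bool) → ℝ) :
    ∑ i : Fin n, (∑ x : Fin n → Bool, h x * chi (x i))^2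
      ≤ (2:ℝ)^n * ∑ x : Fin n → Bool, (h x)^2 := by
  set N : ℝ := (2:ℝ)^n with hN
  set d : Fin n → ℝ := fun i => ∑ x : Fin n → Bool, h x * chi (x i) with hd
  have hNpos : 0 < N := by positivity
  have hT : 0 ≤ ∑ x : Fin n → Bool, (N * h x - ∑ i, d i * chi (x i))^2 :=
    Finset.sum_nonneg fun x _ => sq_nonneg _
  have e1 : ∀ x : Fin n → Bool, (N * h x - ∑ i, d i * chi (x i))^2
      = N^2 * (h x)^2 - 2*N* (∑ i, d i * (h x * chi (x i)))
        + ∑ i, ∑ j, (d i * d j) * (chi (x i) * chi (x j)) := by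
    intro x
    rw [sub_sq]
    congr 1
    · congr 1
      · ring
      · rw [Finset.mul_sum, Finset.mul_sum]
        congr 1; funext i; ring
    · rw [sq, Finset.sum_mul_sum]
      congr 1; funext i; congr 1; funext j; ring
  have expand : ∑ x : Fin n → Bool, (N * h x - ∑ i, d i * chi (x i))^2
      = N^2 * (∑ x : Fin n → Bool, (h x)^2) - N * ∑ i, (d i)^2 := by
    simp_rw [e1]
    rw [Finset.sum_add_distrib, Finset.sum_sub_distrib]
    have m1 : ∑ x : Fin n → Bool, N^2 * (h x)^2 = N^2 * ∑ x : Fin n → Bool, (h x)^2 := by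
      rw [Finset.mul_sum]
    have m2 : ∑ x : Fin n → Bool, 2*N* (∑ i, d i * (h x * chi (x i)))
        = 2*N* ∑ i, (d i)^2 := by
      simp_rw [Finset.mul_sum]
      rw [Finset.sum_comm]
      congr 1; funext i
      rw [← Finset.mul_sum, ← Finset.mul_sum]
      have : ∑ x : Fin n → Bool, h x * chi (x i) = d i := rfl
      rw [this, sq]
    have m3 : ∑ x : Fin n → Bool, (∑ i, ∑ j, (d i * d j) * (chi (x i) * chi (x j)))
        = N * ∑ i, (d i)^2 := by
      rw [Finset.sum_comm]
      have : ∀ i : Fin n, ∑ x : Fin n → Bool, ∑ j, (d i * d j) * (chi (x i) * chi (x j))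
          = N * (d i)^2 := by
        intro i
        rw [Finset.sum_comm]
        have : ∀ j : Fin n, ∑ x : Fin n → Bool, (d i * d j) * (chi (x i) * chi (x j))
            = if i = j then N * (d i)^2 else 0 := by
          intro j
          rw [← Finset.mul_sum, orth]
          split_ifs with hij
          · subst hij; rw [sq]; ring
          · ring
        simp_rw [this]
        simp
      simp_rw [this]
      rw [← Finset.mul_sum]
    rw [m1, m2, m3]
    ring
  rw [expand] at hT
  nlinarith [Finset.sum_nonneg (fun x (_ : x ∈ (Finset.univ : Finset (Fin n → Bool))) => sq_nonneg (h x))]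

/-- If f, g : {−1,1}^n → {−1,1} with g monotone, then
Pr_x[f(x) ≠ g(x)] ≥ (1/4) · Σ_{i : f̂(i) < 0} f̂(i)², where f̂(i) = E_x[f(x)·x_i]. -/
theorem stmt16 (n : ℕ) (f g : (Fin n → Bool) → ℝ)
    (hf : ∀ x, f x = 1 ∨ f x = -1) (hg : ∀ x, g x = 1 ∨ g x = -1)
    (hgmono : ∀ x y : Fin n → Bool, (∀ i, chi (x i) ≤ chi (y i)) → g x ≤ g y)
    (fhat : Fin n → ℝ)
    (hfhat : ∀ i, fhat i = (∑ x : Fin n → Bool, f x * chi (x i)) / 2 ^ n) :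
    (1 / 4) * ∑ i ∈ Finset.univ.filter (fun i => fhat i < 0), fhat i ^ 2 ≤
      ((Finset.univ.filter fun x : Fin n → Bool => f x ≠ g x).card : ℝ) / 2 ^ n := by
  set N : ℝ := (2:ℝ)^n with hN
  have hNpos : 0 < N := by positivity
  set h : (Fin n → Bool) → ℝ := fun x => f x - g x with hh
  set c : Fin n → ℝ := fun i => (∑ x : Fin n → Bool, h x * chi (x i)) / N with hc
  -- each relevant coefficient is dominated
  have step1 : ∀ i ∈ Finset.univ.filter (fun i => fhat i < 0), fhat i ^ 2 ≤ c i ^ 2 := by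
    intro i hi
    rw [Finset.mem_filter] at hi
    have hneg : fhat i < 0 := hi.2
    have hgnn : 0 ≤ (∑ x : Fin n → Bool, g x * chi (x i)) / N :=
      div_nonneg (mono_nonneg n g hgmono i) hNpos.le
    have hci : c i = fhat i - (∑ x : Fin n → Bool, g x * chi (x i)) / N := by
      rw [hc, hfhat]
      simp only [hh, sub_mul]
      rw [Finset.sum_sub_distrib, sub_div]
    nlinarith
  have step2 : ∑ i ∈ Finset.univ.filter (fun i => fhat i < 0), fhat i ^ 2
      ≤ ∑ i : Fin n, c i ^ 2 := by
    calc ∑ i ∈ Finset.univ.filter (fun i => fhat i < 0), fhat i ^ 2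
        ≤ ∑ i ∈ Finset.univ.filter (fun i => fhat i < 0), c i ^ 2 :=
          Finset.sum_le_sum step1
      _ ≤ ∑ i : Fin n, c i ^ 2 :=
          Finset.sum_le_sum_of_subset_of_nonneg (Finset.filter_subset _ _)
            (fun i _ _ => sq_nonneg _)
  have step3 : ∑ i : Fin n, c i ^ 2 ≤ (∑ x : Fin n → Bool, (h x)^2) / N := by
    have hb := bessel n h
    have : ∑ i : Fin n, c i ^ 2
        = (∑ i : Fin n, (∑ x : Fin n → Bool, h x * chi (x i))^2) / N^2 := by
      rw [Finset.sum_div]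
      congr 1; funext i
      rw [hc, div_pow]
    rw [this]
    calc (∑ i : Fin n, (∑ x : Fin n → Bool, h x * chi (x i))^2) / N^2
        ≤ (N * ∑ x : Fin n → Bool, (h x)^2) / N^2 := by gcongr
      _ = (∑ x : Fin n → Bool, (h x)^2) / N := by
          rw [sq, mul_div_mul_left _ _ hNpos.ne']
  have step4 : ∑ x : Fin n → Bool, (h x)^2
      = 4 * ((Finset.univ.filter fun x : Fin n → Bool => f x ≠ g x).card : ℝ) := by
    have hpt : ∀ x : Fin n → Bool, (h x)^2 = if f x ≠ g x then (4:ℝ) else 0 := by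
      intro x
      rcases hf x with h1 | h1 <;> rcases hg x with h2 | h2 <;>
        simp [hh, h1, h2] <;> norm_num
    simp_rw [hpt]
    rw [Finset.sum_ite, Finset.sum_const, Finset.sum_const_zero, add_zero]
    simp [mul_comm]
  have final : (1/4) * ∑ i ∈ Finset.univ.filter (fun i => fhat i < 0), fhat i ^ 2
      ≤ (1/4) * ((∑ x : Fin n → Bool, (h x)^2) / N) := by
    have := le_trans step2 step3
    linarith
  rw [step4] at final
  calc (1 / 4) * ∑ i ∈ Finset.univ.filter (fun i => fhat i < 0), fhat i ^ 2
      ≤ (1/4) * (4 * ((Finset.univ.filter fun x : Fin n → Bool => f x ≠ g x).card : ℝ) / N) := final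
    _ = ((Finset.univ.filter fun x : Fin n → Bool => f x ≠ g x).card : ℝ) / N := by ring
end

section
/- Let n and k be positive integers and let V ⊆ ℝ^n be a linear subspace of dimension k. Then the number of points of {−1/√n, 1/√n}^n lying in V is at most 2^k: |V ∩ {−1/√n, 1/√n}^n| ≤ 2^k. -/
/-!
Restricted to `V`, the coordinate functionals span the dual of `V`, so a maximal linearly
independent family of them consists of `k = dim V` coordinates, and a vector of `V` is determined
by these `k` coordinates. On the cube each coordinate takes only two values, whence at most `2 ^ k`
points.
-/

open Module

namespace Submodule

variable {K ι : Type*} [Field K] (V : Submodule K (ι → K)) [FiniteDimensional K V]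

theorem exists_finset_card_eq_finrank_injective_restrict :
    ∃ s : Finset ι, s.card = finrank K V ∧
      Function.Injective (LinearMap.funLeft K K ((↑) : s → ι) ∘ₗ V.subtype) := by
  classical
  let coord : ι → Dual K V := fun i => LinearMap.proj i ∘ₗ V.subtype
  obtain ⟨κ, a, ha, hspan, hli⟩ := exists_linearIndependent' K coord
  have : Fintype κ := @Fintype.ofFinite κ hli.finite
  set s := Finset.univ.map ⟨a, ha⟩
  have hinj : Function.Injective (LinearMap.funLeft K K ((↑) : s → ι) ∘ₗ V.subtype) := by
    refine (injective_iff_map_eq_zero _).mpr fun v hv => ?_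
    have hle : span K (Set.range (coord ∘ a)) ≤ LinearMap.ker (Dual.eval K V v) := by
      rw [span_le]
      rintro _ ⟨j, rfl⟩
      simpa [coord] using congr_fun hv ⟨a j, by simp [s]⟩
    ext i
    exact hle (hspan ▸ subset_span (Set.mem_range_self i))
  refine ⟨s, le_antisymm ?_ ?_, hinj⟩
  · simpa [s, Subspace.dual_finrank_eq] using hli.fintype_card_le_finrank
  · simpa using LinearMap.finrank_le_finrank_of_injective hinj

theorem ncard_inter_pi_le (A : Finset K) :
    ((V : Set (ι → K)) ∩ {x | ∀ i, x i ∈ A}).ncard ≤ A.card ^ finrank K V := by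
  classical
  obtain ⟨s, hcard, hinj⟩ := V.exists_finset_card_eq_finrank_injective_restrict
  calc ((V : Set (ι → K)) ∩ {x | ∀ i, x i ∈ A}).ncard
      ≤ (Fintype.piFinset fun _ : s => A : Set (s → K)).ncard := by
        refine Set.ncard_le_ncard_of_injOn (fun x i => x i)
          (fun x hx => by simpa using fun i _ => hx.2 i) (fun x hx y hy hxy => ?_)
          (Finset.finite_toSet _)
        simpa using @hinj ⟨x, hx.1⟩ ⟨y, hy.1⟩ hxy
    _ = A.card ^ finrank K V := by
        rw [Set.ncard_coe_finset, Fintype.card_piFinset, Finset.prod_const, Finset.card_univ,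
          Fintype.card_coe, hcard]

end Submodule

theorem stmt18_general (n k : ℕ)
    (V : Submodule ℝ (Fin n → ℝ)) (hdim : Module.finrank ℝ V = k) :
    Set.ncard ((V : Set (Fin n → ℝ)) ∩
        {X : Fin n → ℝ | ∀ i, X i = 1 / Real.sqrt n ∨ X i = -(1 / Real.sqrt n)}) ≤
      2 ^ k := by
  set c : ℝ := 1 / Real.sqrt n
  have hcube : {X : Fin n → ℝ | ∀ i, X i = c ∨ X i = -c} =
      {X | ∀ i, X i ∈ ({c, -c} : Finset ℝ)} := by
    simp
  calc _ ≤ ({c, -c} : Finset ℝ).card ^ k := hcube ▸ hdim ▸ V.ncard_inter_pi_le _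
    _ ≤ 2 ^ k := Nat.pow_le_pow_left Finset.card_le_two k

/-- Odlyzko's lemma: a k-dimensional linear subspace of ℝ^n contains at most 2^k points of
the scaled hypercube {−1/√n, 1/√n}^n. -/
theorem stmt18 (n k : ℕ) (hn : 0 < n) (hk : 0 < k)
    (V : Submodule ℝ (Fin n → ℝ)) (hdim : Module.finrank ℝ V = k) :
    Set.ncard ((V : Set (Fin n → ℝ)) ∩
        {X : Fin n → ℝ | ∀ i, X i = 1 / Real.sqrt n ∨ X i = -(1 / Real.sqrt n)}) ≤
      2 ^ k :=
  stmt18_general n k V hdim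
end

section
/- Let n be a positive integer, let v ∈ ℝ^n with v ≠ 0, and let f(x) := sign(v₁x₁ + ⋯ + v_nx_n) (with the convention sign(0) = 1). Then for every i ∈ [n], the degree-1 Hermite coefficient of f satisfies E_{X ~ N(0, I_n)}[f(X) · X_i] = √(2/π) · v_i / ‖v‖₂, where X is drawn from the standard n-dimensional Gaussian distribution. -/
/-!
Write `eᵢ = (vᵢ / ‖v‖²) v + w` with `w ⊥ v`. The reflection in `w^⊥` preserves the standard
Gaussian, fixes `⟪v, X⟫` and negates `⟪w, X⟫`, so the `w`-part contributes nothing. What remains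
is `(vᵢ / ‖v‖²) E|⟪v, X⟫|`, and `⟪v, X⟫ ~ N(0, ‖v‖²)` has `E|⟪v, X⟫| = ‖v‖ √(2/π)`. Both steps hold
pointwise, so the value of the sign at `0` never matters.
-/

open MeasureTheory ProbabilityTheory Real Set
open scoped NNReal RealInnerProductSpace

lemma integral_Ioi_mul_exp_neg_sq_div_two : ∫ t in Ioi (0 : ℝ), t * exp (-t ^ 2 / 2) = 1 := by
  have h := integral_rpow_mul_exp_neg_mul_rpow (p := 2) (q := 1) (b := 1 / 2)
    two_pos (by norm_num) (by norm_num)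
  norm_num [Real.rpow_neg_one] at h
  simpa only [neg_div, one_div, inv_mul_eq_div] using h

lemma integral_abs_gaussianReal_zero_one : ∫ x, |x| ∂gaussianReal 0 1 = √(2 / π) := by
  have hpdf (x : ℝ) :
      gaussianPDFReal 0 1 x • |x| = (√(2 * π))⁻¹ * (|x| * exp (-|x| ^ 2 / 2)) := by
    simp only [gaussianPDFReal, NNReal.coe_one, mul_one, sub_zero, smul_eq_mul, sq_abs]
    ring
  simp_rw [integral_gaussianReal_eq_integral_smul one_ne_zero, hpdf]
  rw [integral_comp_abs (f := fun t => (√(2 * π))⁻¹ * (t * exp (-t ^ 2 / 2))), integral_const_mul,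
    integral_Ioi_mul_exp_neg_sq_div_two, mul_one,
    show (2 : ℝ) / π = 2 ^ 2 / (2 * π) by field_simp, sqrt_div' _ (by positivity),
    sqrt_sq zero_le_two, div_eq_mul_inv]

lemma integral_abs_gaussianReal (v : ℝ≥0) : ∫ x, |x| ∂gaussianReal 0 v = √v * √(2 / π) := by
  have hmap : (gaussianReal 0 1).map (√v * ·) = gaussianReal 0 v := by
    rw [gaussianReal_map_const_mul]
    congr 1
    · simp
    · ext; simp
  rw [← hmap, integral_map (by fun_prop) (by fun_prop)]
  simp_rw [abs_mul, abs_of_nonneg (sqrt_nonneg _)]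
  rw [integral_const_mul, integral_abs_gaussianReal_zero_one]

section StdGaussian

variable {E : Type*} [NormedAddCommGroup E] [InnerProductSpace ℝ E] [FiniteDimensional ℝ E]
  [MeasurableSpace E] [BorelSpace E]

lemma map_inner_stdGaussian (u : E) :
    (stdGaussian E).map (fun x => ⟪u, x⟫) = gaussianReal 0 (‖u‖₊ ^ 2) := by
  have h : (stdGaussian E).map (innerSL ℝ u) = _ := IsGaussian.map_eq_gaussianReal _
  rwa [integral_strongDual_stdGaussian, variance_dual_stdGaussian, innerSL_apply_norm,
    ← coe_nnnorm, ← NNReal.coe_pow, Real.toNNReal_coe] at h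

lemma integral_abs_inner_stdGaussian (u : E) :
    ∫ x, |⟪u, x⟫| ∂stdGaussian E = ‖u‖ * √(2 / π) := by
  rw [← integral_map (φ := fun x => ⟪u, x⟫) (by fun_prop) continuous_abs.aestronglyMeasurable,
    map_inner_stdGaussian, integral_abs_gaussianReal]
  simp

lemma integral_comp_inner_mul_inner_stdGaussian_of_inner_eq_zero (φ : ℝ → ℝ) {u w : E}
    (huw : ⟪u, w⟫ = 0) : ∫ x, φ ⟪u, x⟫ * ⟪w, x⟫ ∂stdGaussian E = 0 := by
  set R := (ℝ ∙ w)ᗮ.reflection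
  have hR : MeasurePreserving R (stdGaussian E) (stdGaussian E) :=
    ⟨R.continuous.measurable, stdGaussian_map R⟩
  have hu : R u = u := by
    refine Submodule.reflection_mem_subspace_eq_self ?_
    rwa [Submodule.mem_orthogonal_singleton_iff_inner_right, real_inner_comm]
  have hw : R w = -w := Submodule.reflection_orthogonalComplement_singleton_eq_neg w
  have h := hR.integral_comp R.toHomeomorph.measurableEmbedding (fun x => φ ⟪u, x⟫ * ⟪w, x⟫)
  have hinner : ∀ a x : E, ⟪a, R x⟫ = ⟪R a, x⟫ := by
    intro a x
    rw [← R.inner_map_map, Submodule.reflection_reflection]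
  simp_rw [hinner, hu, hw, inner_neg_left, mul_neg, integral_neg] at h
  linarith

lemma integral_comp_inner_mul_inner_stdGaussian {φ : ℝ → ℝ} (hφ : Measurable φ) {C : ℝ}
    (hC : ∀ t, |φ t| ≤ C) (u w : E) :
    ∫ x, φ ⟪u, x⟫ * ⟪w, x⟫ ∂stdGaussian E =
      ⟪u, w⟫ / ‖u‖ ^ 2 * ∫ x, φ ⟪u, x⟫ * ⟪u, x⟫ ∂stdGaussian E := by
  set c := ⟪u, w⟫ / ‖u‖ ^ 2
  have horth : ⟪u, w - c • u⟫ = 0 := by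
    rcases eq_or_ne u 0 with rfl | hu
    · simp
    · rw [inner_sub_right, real_inner_smul_right, real_inner_self_eq_norm_sq,
        div_mul_cancel₀ _ (pow_ne_zero 2 (norm_ne_zero_iff.2 hu)), sub_self]
  have hint (a : E) : Integrable (fun x => φ ⟪u, x⟫ * ⟪a, x⟫) (stdGaussian E) :=
    (IsGaussian.integrable_dual _ (innerSL ℝ a)).bdd_mul
      (hφ.comp (by fun_prop)).aestronglyMeasurable (ae_of_all _ fun x => hC _)
  have hsplit (x : E) :
      φ ⟪u, x⟫ * ⟪w, x⟫ = c * (φ ⟪u, x⟫ * ⟪u, x⟫) + φ ⟪u, x⟫ * ⟪w - c • u, x⟫ := by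
    rw [inner_sub_left, real_inner_smul_left]
    ring
  simp_rw [hsplit]
  rw [integral_add ((hint u).const_mul c) (hint _), integral_const_mul,
    integral_comp_inner_mul_inner_stdGaussian_of_inner_eq_zero φ horth, add_zero]

lemma ite_nonneg_one_neg_one_mul_self (t : ℝ) : (if 0 ≤ t then (1 : ℝ) else -1) * t = |t| := by
  split_ifs with ht
  · rw [one_mul, abs_of_nonneg ht]
  · rw [neg_one_mul, abs_of_neg (not_le.1 ht)]

theorem integral_sign_inner_mul_inner_stdGaussian (u w : E) :
    ∫ x, (if 0 ≤ ⟪u, x⟫ then (1 : ℝ) else -1) * ⟪w, x⟫ ∂stdGaussian E =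
      √(2 / π) * ⟪u, w⟫ / ‖u‖ := by
  have hbound (t : ℝ) : |(if 0 ≤ t then (1 : ℝ) else -1)| ≤ 1 := by split_ifs <;> simp
  rw [integral_comp_inner_mul_inner_stdGaussian (φ := fun t => if 0 ≤ t then (1 : ℝ) else -1)
    (Measurable.ite measurableSet_Ici measurable_const measurable_const) hbound]
  simp_rw [ite_nonneg_one_neg_one_mul_self, integral_abs_inner_stdGaussian]
  rcases eq_or_ne u 0 with rfl | hu
  · simp
  · field_simp

end StdGaussian

theorem stmt19_general (n : ℕ) (v : Fin n → ℝ) (i : Fin n) :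
    ∫ X : Fin n → ℝ,
        (if 0 ≤ ∑ j, v j * X j then (1 : ℝ) else -1) * X i
        ∂(Measure.pi fun _ : Fin n => gaussianReal 0 1) =
      Real.sqrt (2 / Real.pi) * v i / Real.sqrt (∑ j, v j ^ 2) := by
  have hP : MeasurePreserving (WithLp.toLp 2) (Measure.pi fun _ : Fin n => gaussianReal 0 1)
      (stdGaussian (EuclideanSpace ℝ (Fin n))) :=
    ⟨by fun_prop, map_pi_eq_stdGaussian⟩
  have h := hP.integral_comp (MeasurableEquiv.toLp 2 _).measurableEmbedding
    (fun x => (if 0 ≤ ⟪WithLp.toLp 2 v, x⟫ then (1 : ℝ) else -1) *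
      ⟪EuclideanSpace.single i 1, x⟫)
  rw [integral_sign_inner_mul_inner_stdGaussian, EuclideanSpace.inner_single_right,
    EuclideanSpace.norm_eq] at h
  simpa [PiLp.inner_apply, mul_comm] using h

/-- The degree-1 Hermite coefficient of the LTF f(X) = sign(v·X) under the standard Gaussian:
E_{X ~ N(0,I_n)}[f(X)·X_i] = √(2/π) · v_i / ‖v‖₂. -/
theorem stmt19 (n : ℕ) (hn : 0 < n) (v : Fin n → ℝ) (hv : v ≠ 0) (i : Fin n) :
    ∫ X : Fin n → ℝ,
        (if 0 ≤ ∑ j, v j * X j then (1 : ℝ) else -1) * X i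
        ∂(Measure.pi fun _ : Fin n => gaussianReal 0 1) =
      Real.sqrt (2 / Real.pi) * v i / Real.sqrt (∑ j, v j ^ 2) :=
  stmt19_general n v i
end
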